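/- arXiv:1509.06227 — 9 statements merged into one kernel-verified Lean document; each statement's English description precedes it below -/
import Mathlib

section
/- The collection {V_x : x ∈ X} of coding sets is a finite partition of X into clopen sets, and each V_x is contained in the element of the partition W containing x. -/
namespace CantorChains

variable {X : Type*} [TopologicalSpace X]

/-- The group of self-homeomorphisms of `X`, with composition as multiplication. -/
instance : Group (X ≃ₜ X) where
  mul f g := g.trans f
  one := Homeomorph.refl X
  inv := Homeomorph.symm
  mul_assoc _ _ _ := Homeomorph.ext fun _ => rfl
  one_mul _ := Homeomorph.ext fun _ => rfl
  mul_one _ := Homeomorph.ext fun _ => rfl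
  inv_mul_cancel f := Homeomorph.ext fun x => f.symm_apply_apply x

@[simp] lemma homeo_mul_apply (f g : X ≃ₜ X) (x : X) : (f * g) x = f (g x) := rfl
@[simp] lemma homeo_one_apply (x : X) : (1 : X ≃ₜ X) x = x := rfl

/-- The compact-open topology on the group of homeomorphisms (for a compact
metric space this is the topology of uniform convergence). -/
instance : TopologicalSpace (X ≃ₜ X) :=
  TopologicalSpace.induced (fun h : X ≃ₜ X => (h : C(X, X))) inferInstance

/-- The tautological action of the homeomorphism group of `X` on `X`. -/
instance : MulAction (X ≃ₜ X) X where
  smul h x := h x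
  one_smul _ := rfl
  mul_smul _ _ _ := rfl

@[simp] lemma homeo_smul_def (h : X ≃ₜ X) (x : X) : h • x = h x := rfl

variable {G : Type*} [Group G]

/-- The group of automorphisms of the action `Φ`: the homeomorphisms of `X`
commuting with every `Φ g`. -/
def autGroup (Φ : G →* (X ≃ₜ X)) : Subgroup (X ≃ₜ X) where
  carrier := {h | ∀ (g : G) (y : X), h (Φ g y) = Φ g (h y)}
  one_mem' := fun _ _ => rfl
  mul_mem' := fun {a b} ha hb g y => by
    show a (b (Φ g y)) = Φ g (a (b y))
    rw [hb, ha]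
  inv_mem' := fun {a} ha g y => by
    apply a.injective
    show a (a.symm (Φ g y)) = a (Φ g (a.symm y))
    rw [a.apply_symm_apply, ha, a.apply_symm_apply]

end CantorChains

namespace CantorChains

variable {G X : Type*} [Group G] [TopologicalSpace X]

/-- The coding set `V_x` of a point `x` relative to a finite clopen partition
`W` of `X`: the set of points whose coding function agrees with that of `x`,
i.e. `y ∈ V_x` iff for every `g ∈ G`, the points `g·y` and `g·x` lie in the
same element of the partition `W`. -/
def codeSet {n : ℕ} (Φ : G →* (X ≃ₜ X)) (W : Fin n → Set X) (x : X) : Set X :=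
  {y | ∀ (g : G) (k : Fin n), Φ g y ∈ W k ↔ Φ g x ∈ W k}

end CantorChains

namespace CantorChains

/-- For an equicontinuous action of a group `G` on a compact metric
space `X` and a finite partition `W` of `X` into nonempty clopen sets, the collection
`{V_x : x ∈ X}` of coding sets is a finite partition of `X` into clopen sets, and each
`V_x` is contained in the element of the partition `W` containing `x`. -/
theorem codeSets_finite_clopen_partition {G X : Type*} [Group G] [MetricSpace X]
    [CompactSpace X]
    (Φ : G →* (X ≃ₜ X))
    (heq : ∀ ε > 0, ∃ δ > 0, ∀ (g : G) (y z : X), dist y z < δ → dist (Φ g y) (Φ g z) < ε)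
    {n : ℕ} (W : Fin n → Set X)
    (hclopen : ∀ k, IsClopen (W k)) (hne : ∀ k, (W k).Nonempty)
    (hdisj : ∀ k l, k ≠ l → Disjoint (W k) (W l))
    (hcover : (⋃ k, W k) = Set.univ) :
    (Set.range fun x : X => codeSet Φ W x).Finite ∧
    (∀ x : X, IsClopen (codeSet Φ W x)) ∧
    (∀ x : X, x ∈ codeSet Φ W x) ∧
    (⋃ x : X, codeSet Φ W x) = Set.univ ∧
    (∀ x y : X, codeSet Φ W x = codeSet Φ W y ∨ Disjoint (codeSet Φ W x) (codeSet Φ W y)) ∧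
    (∀ (x : X) (k : Fin n), x ∈ W k → codeSet Φ W x ⊆ W k) := by
  classical
  obtain ⟨ε, hε, hleb⟩ := lebesgue_number_lemma_of_metric (s := (Set.univ : Set X))
    isCompact_univ (fun k => (hclopen k).2) (by rw [hcover])
  obtain ⟨δ, hδ, hδ'⟩ := heq ε hε
  -- points within δ have the same code
  have hsame : ∀ y z : X, dist y z < δ → ∀ (g : G) (k : Fin n),
      (Φ g y ∈ W k ↔ Φ g z ∈ W k) := by
    intro y z hyz g k
    have hd : dist (Φ g y) (Φ g z) < ε := hδ' g y z hyz
    obtain ⟨l, hl⟩ := hleb (Φ g y) (Set.mem_univ _)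
    have hyl : Φ g y ∈ W l := hl (Metric.mem_ball_self hε)
    have hzl : Φ g z ∈ W l := hl (by rwa [Metric.mem_ball, dist_comm])
    constructor
    · intro hy
      have hlk : l = k := by
        by_contra h
        exact Set.disjoint_left.mp (hdisj l k h) hyl hy
      exact hlk ▸ hzl
    · intro hz
      have hlk : l = k := by
        by_contra h
        exact Set.disjoint_left.mp (hdisj l k h) hzl hz
      exact hlk ▸ hyl
  -- membership implies equality of code sets
  have hmemeq : ∀ x y : X, y ∈ codeSet Φ W x → codeSet Φ W y = codeSet Φ W x := by
    intro x y hy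
    ext z
    constructor
    · intro hz g k
      exact (hz g k).trans (hy g k)
    · intro hz g k
      exact (hz g k).trans (hy g k).symm
  have hself : ∀ x : X, x ∈ codeSet Φ W x := fun x g k => Iff.rfl
  have hopen : ∀ x : X, IsOpen (codeSet Φ W x) := by
    intro x
    rw [Metric.isOpen_iff]
    intro y hy
    refine ⟨δ, hδ, fun z hz g k => ?_⟩
    exact (hsame z y (Metric.mem_ball.mp hz) g k).trans (hy g k)
  have hclosed : ∀ x : X, IsClosed (codeSet Φ W x) := by
    intro x
    rw [← isOpen_compl_iff, Metric.isOpen_iff]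
    intro y hy
    refine ⟨δ, hδ, fun z hz hzmem => ?_⟩
    exact hy (fun g k => (hsame y z (by rwa [dist_comm, ← Metric.mem_ball]) g k).trans (hzmem g k))
  have hcov : (Set.univ : Set X) ⊆ ⋃ x : X, codeSet Φ W x :=
    fun x _ => Set.mem_iUnion.mpr ⟨x, hself x⟩
  refine ⟨?_, fun x => ⟨hclosed x, hopen x⟩, hself, ?_, ?_, ?_⟩
  · obtain ⟨t, ht⟩ := isCompact_univ.elim_finite_subcover (fun x => codeSet Φ W x) hopen hcov
    refine Set.Finite.subset (t.finite_toSet.image fun x => codeSet Φ W x) ?_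
    rintro s ⟨x, rfl⟩
    obtain ⟨y, hyt, hxy⟩ := Set.mem_iUnion₂.mp (ht (Set.mem_univ x))
    exact ⟨y, hyt, (hmemeq y x hxy).symm⟩
  · exact Set.eq_univ_of_univ_subset hcov
  · intro x y
    by_cases h : (codeSet Φ W x ∩ codeSet Φ W y).Nonempty
    · obtain ⟨z, hzx, hzy⟩ := h
      exact Or.inl ((hmemeq x z hzx).symm.trans (hmemeq y z hzy))
    · exact Or.inr (Set.disjoint_iff_inter_eq_empty.mpr
        (Set.not_nonempty_iff_eq_empty.mp h))
  · intro x k hx y hy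
    have h1 := hy 1 k
    rw [map_one] at h1
    have h2 : y ∈ W k ↔ x ∈ W k := by simpa using h1
    exact h2.mpr hx


end CantorChains
end

section
/- Let {G_i}_{i≥0} and {H_i}_{i≥0} be group chains in G with G_0 = H_0 = G, and let G_∞ and H_∞ be their inverse limits. Then {G_i} and {H_i} are conjugate equivalent if and only if there exists a homeomorphism τ : G_∞ → H_∞ which is equivariant with respect to the G-actions on G_∞ and H_∞. -/
namespace CantorChains

variable {G : Type*} [Group G]

/-- The map between left coset spaces induced by an inclusion of subgroups. -/
def cosetMap {H K : Subgroup G} (h : H ≤ K) : G ⧸ H → G ⧸ K :=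
  Quotient.map' id fun a b hab => by
    rw [QuotientGroup.leftRel_apply] at hab ⊢
    exact h hab

@[simp] lemma cosetMap_mk {H K : Subgroup G} (h : H ≤ K) (a : G) :
    cosetMap h (QuotientGroup.mk a) = QuotientGroup.mk a := rfl

instance (H : Subgroup G) : TopologicalSpace (G ⧸ H) := ⊥
instance (H : Subgroup G) : DiscreteTopology (G ⧸ H) := ⟨rfl⟩

lemma cosetMap_smul {H K : Subgroup G} (h : H ≤ K) (g : G) (q : G ⧸ H) :
    cosetMap h (g • q) = g • cosetMap h q := by
  induction q using Quotient.inductionOn' with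
  | h a => rfl

/-- The inverse limit of the coset spaces of a (nested) family of subgroups. -/
def InvLim (V : ℕ → Subgroup G) : Type _ :=
  {u : ∀ i, G ⧸ V i // ∀ i j, i ≤ j → ∀ hle : V j ≤ V i, cosetMap hle (u j) = u i}

instance (V : ℕ → Subgroup G) : TopologicalSpace (InvLim V) :=
  instTopologicalSpaceSubtype

/-- The natural left `G`-action on the inverse limit. -/
instance (V : ℕ → Subgroup G) : MulAction G (InvLim V) where
  smul g u := ⟨fun i => g • u.1 i, fun i j hij hle => by
    rw [cosetMap_smul, u.2 i j hij hle]⟩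
  one_smul u := Subtype.ext (funext fun i => one_smul _ _)
  mul_smul a b u := Subtype.ext (funext fun i => mul_smul a b (u.1 i))

lemma smul_coord (V : ℕ → Subgroup G) (g : G) (u : InvLim V) (i : ℕ) :
    (g • u).1 i = g • u.1 i := rfl

/-- The canonical basepoint `(eG_i)` of the inverse limit. -/
def basepoint (V : ℕ → Subgroup G) : InvLim V :=
  ⟨fun _ => QuotientGroup.mk 1, fun _ _ _ _ => rfl⟩

/-- A group chain: a properly descending chain of finite index subgroups,
starting at the full group. -/
structure GroupChain (G : Type*) [Group G] where
  sub : ℕ → Subgroup G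
  sub_zero : sub 0 = ⊤
  sub_lt : ∀ i, sub (i + 1) < sub i
  finiteIndex : ∀ i, (sub i).FiniteIndex

lemma GroupChain.antitone (C : GroupChain G) : Antitone C.sub :=
  antitone_nat_of_succ_le fun i => (C.sub_lt i).le

/-- Equivalence of group chains: some interleaving of subsequences is again a chain. -/
def ChainEquiv (Gc Hc : GroupChain G) : Prop :=
  ∃ (Kc : GroupChain G) (a b : ℕ → ℕ), StrictMono a ∧ StrictMono b ∧
    (∀ k, Kc.sub (2 * k) = Gc.sub (a k)) ∧ (∀ k, Kc.sub (2 * k + 1) = Hc.sub (b k))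

/-- The conjugate `g H g⁻¹` of a subgroup. -/
def conjSubgroup (g : G) (H : Subgroup G) : Subgroup G :=
  H.map (MulAut.conj g).toMonoidHom

/-- Conjugate equivalence of group chains. -/
def ChainConjEquiv (Gc Hc : GroupChain G) : Prop :=
  ∃ g : ℕ → G,
    (∀ i j, i ≤ j → (QuotientGroup.mk (g j) : G ⧸ Gc.sub i) = QuotientGroup.mk (g i)) ∧
    ∃ (Kc : GroupChain G) (a b : ℕ → ℕ), StrictMono a ∧ StrictMono b ∧
      (∀ k, Kc.sub (2 * k) = conjSubgroup (g (a k)) (Gc.sub (a k))) ∧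
      (∀ k, Kc.sub (2 * k + 1) = Hc.sub (b k))

lemma cosetMap_mul {N M : Subgroup G} [N.Normal] [M.Normal] (h : N ≤ M) (q r : G ⧸ N) :
    cosetMap h (q * r) = cosetMap h q * cosetMap h r := by
  induction q using Quotient.inductionOn' with
  | h a =>
    induction r using Quotient.inductionOn' with
    | h b => rfl

lemma cosetMap_inv {N M : Subgroup G} [N.Normal] [M.Normal] (h : N ≤ M) (q : G ⧸ N) :
    cosetMap h q⁻¹ = (cosetMap h q)⁻¹ := by
  induction q using Quotient.inductionOn' with
  | h a => rfl

/-- The inverse limit of the quotient groups `A ⧸ N i`, as a subgroup of the product. -/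
def quotLim {A : Type*} [Group A] (N : ℕ → Subgroup A) [∀ i, (N i).Normal] :
    Subgroup (∀ i, A ⧸ N i) where
  carrier := {u | ∀ i j, i ≤ j → ∀ hle : N j ≤ N i, cosetMap hle (u j) = u i}
  one_mem' := fun _ _ _ _ => rfl
  mul_mem' := fun {a b} ha hb i j hij hle => by
    show cosetMap hle (a j * b j) = a i * b i
    rw [cosetMap_mul, ha i j hij hle, hb i j hij hle]
  inv_mem' := fun {a} ha i j hij hle => by
    show cosetMap hle (a j)⁻¹ = (a i)⁻¹
    rw [cosetMap_inv, ha i j hij hle]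

variable (V : ℕ → Subgroup G)

/-- The limit core `C_∞ = lim← G ⧸ C_i` of a chain of subgroups. -/
def limitCore : Subgroup (∀ i, G ⧸ (V i).normalCore) :=
  quotLim fun i => (V i).normalCore

/-- The discriminant group `D_x = lim← G_i ⧸ C_i` of a chain of subgroups. -/
def discriminant : Subgroup (∀ i, G ⧸ (V i).normalCore) where
  carrier := {u | u ∈ limitCore V ∧ ∀ i, ∃ g ∈ V i, QuotientGroup.mk g = u i}
  one_mem' := ⟨(limitCore V).one_mem, fun i => ⟨1, (V i).one_mem, rfl⟩⟩
  mul_mem' := fun {a b} ha hb => ⟨mul_mem ha.1 hb.1, fun i => by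
    obtain ⟨g, hg, hga⟩ := ha.2 i
    obtain ⟨h, hh, hhb⟩ := hb.2 i
    exact ⟨g * h, mul_mem hg hh, by rw [Pi.mul_apply, ← hga, ← hhb]; rfl⟩⟩
  inv_mem' := fun {a} ha => ⟨inv_mem ha.1, fun i => by
    obtain ⟨g, hg, hga⟩ := ha.2 i
    exact ⟨g⁻¹, inv_mem hg, by rw [Pi.inv_apply, ← hga]; rfl⟩⟩

lemma discriminant_le_limitCore : discriminant V ≤ limitCore V := fun _ hu => hu.1

/-- The natural homomorphism `ι : G → ∏ G ⧸ C_i`. -/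
def iotaPi : G →* ∀ i, G ⧸ (V i).normalCore :=
  MonoidHom.mk' (fun g i => QuotientGroup.mk g) fun _ _ => rfl

lemma iotaPi_mem_limitCore (g : G) : iotaPi V g ∈ limitCore V :=
  fun _ _ _ _ => rfl

/-- The natural homomorphism `ι : G → C_∞` into the limit core. -/
def iotaC : G →* ↥(limitCore V) :=
  (iotaPi V).codRestrict _ (iotaPi_mem_limitCore V)

end CantorChains

namespace CantorChains

/-!
The `G`-set `InvLim V` is transitive at every level, so up to equivariant homeomorphism it is
determined by the chain of stabilizers of any one of its points, and at level `i` the stabilizer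
of the point `(g_i V_i)` is `g_i V_i g_i⁻¹`. Two such stabilizer chains give equivariantly
homeomorphic inverse limits as soon as each eventually refines the other, and for chains this
mutual refinement is exactly the existence of an interleaving chain. Conversely, an equivariant
homeomorphism `τ` is continuous in both directions, which forces the stabilizer chain of
`τ⁻¹(basepoint)` and `{H_i}` to refine each other.
-/

open MulAction

universe u

variable {G : Type u} [Group G]

lemma cosetMap_refl {H : Subgroup G} (q : G ⧸ H) : cosetMap le_rfl q = q := by
  obtain ⟨a, rfl⟩ := QuotientGroup.mk_surjective q
  rfl

lemma cosetMap_cosetMap {H K L : Subgroup G} (hHK : H ≤ K) (hKL : K ≤ L) (q : G ⧸ H) :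
    cosetMap hKL (cosetMap hHK q) = cosetMap (hHK.trans hKL) q := by
  obtain ⟨a, rfl⟩ := QuotientGroup.mk_surjective q
  rfl

lemma stabilizer_mk (g : G) (H : Subgroup G) :
    stabilizer G (QuotientGroup.mk g : G ⧸ H) = conjSubgroup g H := by
  have hg : (QuotientGroup.mk g : G ⧸ H) = g • ((1 : G) : G ⧸ H) := by
    rw [MulAction.Quotient.smul_coe, smul_eq_mul, mul_one]
  rw [hg, stabilizer_smul_eq_stabilizer_map_conj, stabilizer_quotient]
  rfl

lemma symm_smul_of_map_smul {M X Y : Type*} [SMul M X] [SMul M Y] (e : X ≃ Y)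
    (he : ∀ (g : M) x, e (g • x) = g • e x) (g : M) (y : Y) : e.symm (g • y) = g • e.symm y :=
  e.injective (by rw [he, e.apply_symm_apply, e.apply_symm_apply])

section Interleaving

variable {V W : ℕ → Subgroup G}

def Refines (V W : ℕ → Subgroup G) : Prop :=
  ∀ n, ∃ i, V i ≤ W n

def Interleaves (V W : ℕ → Subgroup G) : Prop :=
  ∃ (Kc : GroupChain G) (a b : ℕ → ℕ), StrictMono a ∧ StrictMono b ∧
    (∀ k, Kc.sub (2 * k) = V (a k)) ∧ (∀ k, Kc.sub (2 * k + 1) = W (b k))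

theorem Interleaves.refines (hW : Antitone W) (h : Interleaves V W) : Refines V W := by
  obtain ⟨Kc, a, b, -, hb, hKa, hKb⟩ := h
  refine fun n => ⟨a (n + 1), ?_⟩
  calc V (a (n + 1)) = Kc.sub (2 * n + 1 + 1) := (hKa (n + 1)).symm
    _ ≤ Kc.sub (2 * n + 1) := (Kc.sub_lt _).le
    _ = W (b n) := hKb n
    _ ≤ W n := hW (hb.id_le n)

theorem Interleaves.refines_symm (hV : Antitone V) (h : Interleaves V W) : Refines W V := by
  obtain ⟨Kc, a, b, ha, -, hKa, hKb⟩ := h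
  refine fun i => ⟨b i, ?_⟩
  calc W (b i) = Kc.sub (2 * i + 1) := (hKb i).symm
    _ ≤ Kc.sub (2 * i) := (Kc.sub_lt _).le
    _ = V (a i) := hKa i
    _ ≤ V i := hV (ha.id_le i)

theorem interleaves_of_lt (hV : Antitone V) (hV0 : V 0 = ⊤) (D : GroupChain G) {a b : ℕ → ℕ}
    (ha0 : a 0 = 0) (hba : ∀ k, D.sub (b k) < V (a k)) (hab : ∀ k, V (a (k + 1)) < D.sub (b k))
    (hfin : ∀ k, (V (a k)).FiniteIndex) : Interleaves V D.sub := by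
  have heven (k : ℕ) : ((V ∘ a) ⋈ (D.sub ∘ b)).get (2 * k) = V (a k) :=
    Stream'.get_interleave_left _ _ _
  have hodd (k : ℕ) : ((V ∘ a) ⋈ (D.sub ∘ b)).get (2 * k + 1) = D.sub (b k) :=
    Stream'.get_interleave_right _ _ _
  let Kc : GroupChain G :=
    { sub := ((V ∘ a) ⋈ (D.sub ∘ b)).get
      sub_zero := by rw [← Nat.mul_zero 2, heven, ha0, hV0]
      sub_lt := fun m => by
        obtain ⟨k, rfl | rfl⟩ := Nat.even_or_odd' m
        · rw [hodd, heven]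
          exact hba k
        · rw [show 2 * k + 1 + 1 = 2 * (k + 1) by ring, heven, hodd]
          exact hab k
      finiteIndex := fun m => by
        obtain ⟨k, rfl | rfl⟩ := Nat.even_or_odd' m
        · rw [heven]
          exact hfin k
        · rw [hodd]
          exact D.finiteIndex (b k) }
  exact ⟨Kc, a, b,
    strictMono_nat_of_lt_succ fun k => hV.reflect_lt ((hab k).trans (hba k)),
    strictMono_nat_of_lt_succ fun k => D.antitone.reflect_lt ((hba (k + 1)).trans (hab k)),
    heven, hodd⟩

theorem interleaves_of_refines (hV : Antitone V) (hV0 : V 0 = ⊤) (D : GroupChain G)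
    (hVD : Refines V D.sub) (hDV : Refines D.sub V) : Interleaves V D.sub := by
  -- Strictness of `D` alone makes both inclusions strict one level further down.
  choose f hf using hVD
  choose h hh using hDV
  let a : ℕ → ℕ := fun k => (fun i => f (h i + 1 + 1))^[k] 0
  refine interleaves_of_lt hV hV0 D (a := a) (b := fun k => h (a k) + 1) rfl
    (fun k => (D.sub_lt _).trans_le (hh _)) (fun k => ?_) (fun k => ?_)
  · rw [show a (k + 1) = f (h (a k) + 1 + 1) from Function.iterate_succ_apply' _ _ _]
    exact (hf _).trans_lt (D.sub_lt _)
  · have := D.finiteIndex (h (a k))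
    exact Subgroup.finiteIndex_of_le (hh _)

end Interleaving

namespace InvLim

variable {V W : ℕ → Subgroup G}

theorem ext {u v : InvLim V} (h : ∀ i, u.1 i = v.1 i) : u = v :=
  Subtype.ext (funext h)

theorem continuous_coord (i : ℕ) : Continuous fun u : InvLim V => u.1 i :=
  (continuous_apply i).comp continuous_subtype_val

theorem continuous_of_coord {X : Type*} [TopologicalSpace X] {f : X → InvLim V}
    (hf : ∀ i, Continuous fun x => (f x).1 i) : Continuous f :=
  continuous_induced_rng.2 (continuous_pi hf)

theorem exists_forall_coord_eq_mem (hV : Antitone V) {s : Set (InvLim V)} (hs : IsOpen s)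
    {x : InvLim V} (hx : x ∈ s) : ∃ i, ∀ u : InvLim V, u.1 i = x.1 i → u ∈ s := by
  obtain ⟨t, ht, rfl⟩ := isOpen_induced_iff.mp hs
  obtain ⟨I, U, hU, hsub⟩ := isOpen_pi_iff.mp ht x.1 hx
  refine ⟨I.sup id, fun u hu => hsub fun j hj => ?_⟩
  have hj' : j ≤ I.sup id := Finset.le_sup (f := id) hj
  rw [← u.2 j _ hj' (hV hj'), hu, x.2 j _ hj' (hV hj')]
  exact (hU j hj).2

theorem cosetMap_coord_eq (hV : Antitone V) (u : InvLim V) {K : Subgroup G} {i j : ℕ}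
    (hi : V i ≤ K) (hj : V j ≤ K) : cosetMap hi (u.1 i) = cosetMap hj (u.1 j) := by
  wlog hij : i ≤ j generalizing i j
  · exact (this hj hi (le_of_not_ge hij)).symm
  rw [← u.2 i j hij (hV hij), cosetMap_cosetMap]

noncomputable def mapOfRefines (hV : Antitone V) (h : Refines V W) (u : InvLim V) : InvLim W :=
  ⟨fun n => cosetMap (h n).choose_spec (u.1 (h n).choose), fun _ _ _ _ => by
    rw [cosetMap_cosetMap]
    exact cosetMap_coord_eq hV u _ _⟩

theorem mapOfRefines_coord (hV : Antitone V) (h : Refines V W) (u : InvLim V) {i n : ℕ}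
    (hi : V i ≤ W n) : (mapOfRefines hV h u).1 n = cosetMap hi (u.1 i) :=
  cosetMap_coord_eq hV u (h n).choose_spec hi

theorem continuous_mapOfRefines (hV : Antitone V) (h : Refines V W) :
    Continuous (mapOfRefines hV h) :=
  continuous_of_coord fun _ => continuous_of_discreteTopology.comp (continuous_coord _)

theorem mapOfRefines_smul (hV : Antitone V) (h : Refines V W) (g : G) (u : InvLim V) :
    mapOfRefines hV h (g • u) = g • mapOfRefines hV h u :=
  ext fun n => cosetMap_smul (h n).choose_spec _ _

theorem mapOfRefines_mapOfRefines (hV : Antitone V) (hW : Antitone W) (hVW : Refines V W)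
    (hWV : Refines W V) (u : InvLim V) : mapOfRefines hW hWV (mapOfRefines hV hVW u) = u :=
  ext fun i => by
    obtain ⟨n, hn⟩ := hWV i
    obtain ⟨j, hj⟩ := hVW n
    rw [mapOfRefines_coord hW hWV _ hn, mapOfRefines_coord hV hVW _ hj, cosetMap_cosetMap,
      cosetMap_coord_eq hV u _ le_rfl, cosetMap_refl]

noncomputable def homeomorphOfRefines (hV : Antitone V) (hW : Antitone W) (hVW : Refines V W)
    (hWV : Refines W V) : InvLim V ≃ₜ InvLim W where
  toFun := mapOfRefines hV hVW
  invFun := mapOfRefines hW hWV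
  left_inv := mapOfRefines_mapOfRefines hV hW hVW hWV
  right_inv := mapOfRefines_mapOfRefines hW hV hWV hVW
  continuous_toFun := continuous_mapOfRefines hV hVW
  continuous_invFun := continuous_mapOfRefines hW hWV

def levelwiseHomeomorph (hV : Antitone V) (hW : Antitone W) (e : ∀ i, G ⧸ V i ≃ G ⧸ W i)
    (he : ∀ i j (hij : i ≤ j) q, cosetMap (hW hij) (e j q) = e i (cosetMap (hV hij) q)) :
    InvLim V ≃ₜ InvLim W where
  toFun u := ⟨fun i => e i (u.1 i), fun i j hij _ => by rw [he i j hij, u.2 i j hij]⟩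
  invFun v := ⟨fun i => (e i).symm (v.1 i), fun i j hij _ =>
    (e i).eq_symm_apply.2 (by rw [← he i j hij, Equiv.apply_symm_apply, v.2 i j hij])⟩
  left_inv u := ext fun i => (e i).symm_apply_apply _
  right_inv v := ext fun i => (e i).apply_symm_apply _
  continuous_toFun := continuous_of_coord fun _ =>
    continuous_of_discreteTopology.comp (continuous_coord _)
  continuous_invFun := continuous_of_coord fun _ =>
    continuous_of_discreteTopology.comp (continuous_coord _)

theorem levelwiseHomeomorph_smul (hV : Antitone V) (hW : Antitone W)
    (e : ∀ i, G ⧸ V i ≃ G ⧸ W i)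
    (he : ∀ i j (hij : i ≤ j) q, cosetMap (hW hij) (e j q) = e i (cosetMap (hV hij) q))
    (he_smul : ∀ i (g : G) q, e i (g • q) = g • e i q) (g : G) (u : InvLim V) :
    levelwiseHomeomorph hV hW e he (g • u) = g • levelwiseHomeomorph hV hW e he u :=
  ext fun i => he_smul i g (u.1 i)

def stabilizers (x : InvLim V) (i : ℕ) : Subgroup G :=
  stabilizer G (x.1 i)

theorem antitone_stabilizers (hV : Antitone V) (x : InvLim V) : Antitone (stabilizers x) :=
  fun i j hij c hc => by
    rw [stabilizers, mem_stabilizer_iff] at hc ⊢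
    rw [← x.2 i j hij (hV hij), ← cosetMap_smul, hc]

theorem stabilizers_basepoint : stabilizers (basepoint V) = V :=
  funext fun i => stabilizer_quotient (V i)

theorem stabilizers_eq_top (x : InvLim V) {i : ℕ} (h : V i = ⊤) : stabilizers x i = ⊤ := by
  obtain ⟨g, hg⟩ := QuotientGroup.mk_surjective (x.1 i)
  rw [stabilizers, ← hg, stabilizer_mk, h]
  exact Subgroup.map_top_of_surjective _ (MulEquiv.surjective _)

noncomputable def orbitEquiv (x : InvLim V) (i : ℕ) : G ⧸ stabilizers x i ≃ G ⧸ V i :=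
  Equiv.ofBijective (ofQuotientStabilizer G (x.1 i))
    ⟨injective_ofQuotientStabilizer G _, fun q =>
      let ⟨c, hc⟩ := surjective_smul G (x.1 i) q
      ⟨c, hc⟩⟩

theorem cosetMap_orbitEquiv (hV : Antitone V) (x : InvLim V) {i j : ℕ} (hij : i ≤ j)
    (q : G ⧸ stabilizers x j) :
    cosetMap (hV hij) (orbitEquiv x j q) =
      orbitEquiv x i (cosetMap (antitone_stabilizers hV x hij) q) := by
  obtain ⟨c, rfl⟩ := QuotientGroup.mk_surjective q
  change cosetMap _ (c • x.1 j) = c • x.1 i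
  rw [cosetMap_smul, x.2 i j hij]

noncomputable def stabilizersHomeomorph (hV : Antitone V) (x : InvLim V) :
    InvLim (stabilizers x) ≃ₜ InvLim V :=
  levelwiseHomeomorph (antitone_stabilizers hV x) hV (orbitEquiv x)
    fun _ _ hij => cosetMap_orbitEquiv hV x hij

theorem stabilizersHomeomorph_smul (hV : Antitone V) (x : InvLim V) (g : G)
    (u : InvLim (stabilizers x)) :
    stabilizersHomeomorph hV x (g • u) = g • stabilizersHomeomorph hV x u :=
  levelwiseHomeomorph_smul _ _ _ _ (fun i => ofQuotientStabilizer_smul G (x.1 i)) g u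

theorem refines_stabilizers_of_continuous (hV : Antitone V) {f : InvLim V → InvLim W}
    (hf : Continuous f) (hfg : ∀ (g : G) u, f (g • u) = g • f u) (x : InvLim V) :
    Refines (stabilizers x) (stabilizers (f x)) := by
  intro n
  have hopen : IsOpen (f ⁻¹' {v | v.1 n = (f x).1 n}) :=
    (isOpen_discrete ({(f x).1 n} : Set (G ⧸ W n))).preimage ((continuous_coord n).comp hf)
  obtain ⟨i, hi⟩ := exists_forall_coord_eq_mem hV hopen rfl
  refine ⟨i, fun c hc => ?_⟩
  have hcx : f (c • x) ∈ {v : InvLim W | v.1 n = (f x).1 n} := hi (c • x) hc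
  rwa [hfg] at hcx

end InvLim

open InvLim

theorem chainConjEquiv_iff_exists_interleaves {Gc Hc : GroupChain G} :
    ChainConjEquiv Gc Hc ↔ ∃ x : InvLim Gc.sub, Interleaves (stabilizers x) Hc.sub := by
  constructor
  · rintro ⟨g, hg, hI⟩
    let x : InvLim Gc.sub := ⟨fun i => QuotientGroup.mk (g i), fun i j hij _ => hg i j hij⟩
    have hx : stabilizers x = fun i => conjSubgroup (g i) (Gc.sub i) :=
      funext fun i => stabilizer_mk (g i) (Gc.sub i)
    refine ⟨x, ?_⟩
    rw [hx]
    exact hI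
  · rintro ⟨x, hI⟩
    let g : ℕ → G := fun i => (x.1 i).out
    have hxg (i : ℕ) : x.1 i = QuotientGroup.mk (g i) := (QuotientGroup.out_eq' _).symm
    have hx : stabilizers x = fun i => conjSubgroup (g i) (Gc.sub i) :=
      funext fun i => by rw [stabilizers, hxg, stabilizer_mk]
    rw [hx] at hI
    refine ⟨g, fun i j hij => ?_, hI⟩
    rw [← hxg, ← x.2 i j hij (Gc.antitone hij), hxg, cosetMap_mk]

/-- Two group chains are conjugate equivalent if and only if there is a
`G`-equivariant homeomorphism between their inverse limits (not necessarily preserving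
the basepoints). -/
theorem chainConjEquiv_iff_equivariant_homeo {G : Type*} [Group G]
    (Gc Hc : GroupChain G) :
    ChainConjEquiv Gc Hc ↔
      ∃ τ : InvLim Gc.sub ≃ₜ InvLim Hc.sub,
        ∀ (g : G) (u : InvLim Gc.sub), τ (g • u) = g • τ u := by
  rw [chainConjEquiv_iff_exists_interleaves]
  constructor
  · rintro ⟨x, hI⟩
    have hx := antitone_stabilizers Gc.antitone x
    let σ := stabilizersHomeomorph Gc.antitone x
    let ρ := homeomorphOfRefines hx Hc.antitone (hI.refines Hc.antitone) (hI.refines_symm hx)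
    refine ⟨σ.symm.trans ρ, fun g u => ?_⟩
    have hσ : σ.symm (g • u) = g • σ.symm u :=
      symm_smul_of_map_smul σ.toEquiv (stabilizersHomeomorph_smul Gc.antitone x) g u
    change ρ (σ.symm (g • u)) = g • ρ (σ.symm u)
    rw [hσ]
    exact mapOfRefines_smul hx _ g _
  · rintro ⟨τ, hτ⟩
    let x := τ.symm (basepoint Hc.sub)
    have hτx : stabilizers (τ x) = Hc.sub := by
      rw [Homeomorph.apply_symm_apply, stabilizers_basepoint]
    refine ⟨x, interleaves_of_refines (antitone_stabilizers Gc.antitone x)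
      (stabilizers_eq_top x Gc.sub_zero) Hc ?_ ?_⟩
    · simpa only [hτx] using refines_stabilizers_of_continuous Gc.antitone τ.continuous hτ x
    · simpa only [stabilizers_basepoint] using refines_stabilizers_of_continuous Hc.antitone
        τ.symm.continuous (symm_smul_of_map_smul τ.toEquiv hτ) (basepoint Hc.sub)

end CantorChains
end

section
/- Let {G_i}_{i≥0} be a group chain in G, and let (g_i)_{i≥0} be a sequence in G with g_j G_i = g_i G_i for all j ≥ i. Set H_i = g_i G_i g_i^{-1}, so that {H_i}_{i≥0} is a nested group chain. Then there exists a homeomorphism τ : G_∞ → H_∞ between the inverse limits such that τ((eG_i)) = (g_i^{-1} H_i) and τ(s·y) = s·τ(y) for all y ∈ G_∞ and all s ∈ G. -/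
namespace CantorChains

lemma mem_conjSubgroup {G : Type*} [Group G] (c : G) (K : Subgroup G) (x : G) :
    x ∈ conjSubgroup c K ↔ c⁻¹ * x * c ∈ K := by
  simp only [conjSubgroup, Subgroup.mem_map, MulEquiv.coe_toMonoidHom, MulAut.conj_apply]
  constructor
  · rintro ⟨a, ha, rfl⟩
    have : c⁻¹ * (c * a * c⁻¹) * c = a := by group
    rwa [this]
  · intro h
    exact ⟨c⁻¹ * x * c, h, by group⟩

/-- Given a group chain `{G_i}` and a sequence `(g_i)` in `G` with
`g_j G_i = g_i G_i` for all `j ≥ i`, the conjugate chain `H_i = g_i G_i g_i⁻¹` is a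
nested group chain, and there is a `G`-equivariant homeomorphism
`τ : G_∞ → H_∞` with `τ((eG_i)) = (g_i⁻¹ H_i)`. -/
theorem conjugate_chain_equivariant_homeo {G : Type*} [Group G]
    (Gc : GroupChain G) (g : ℕ → G)
    (hg : ∀ i j, i ≤ j → (QuotientGroup.mk (g j) : G ⧸ Gc.sub i) = QuotientGroup.mk (g i)) :
    (∀ i, conjSubgroup (g (i + 1)) (Gc.sub (i + 1)) ≤ conjSubgroup (g i) (Gc.sub i)) ∧
    ∃ τ : InvLim Gc.sub ≃ₜ InvLim (fun i => conjSubgroup (g i) (Gc.sub i)),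
      (∀ (s : G) (u : InvLim Gc.sub), τ (s • u) = s • τ u) ∧
      (∀ i, (τ (basepoint Gc.sub)).1 i = QuotientGroup.mk (g i)⁻¹) := by
  set H : ℕ → Subgroup G := fun i => conjSubgroup (g i) (Gc.sub i) with hH
  have hg' : ∀ i j, i ≤ j → (g j)⁻¹ * g i ∈ Gc.sub i :=
    fun i j hij => QuotientGroup.eq.mp (hg i j hij)
  have part1 : ∀ i, H (i + 1) ≤ H i := by
    intro i x hx
    rw [mem_conjSubgroup] at hx ⊢
    have h1 : (g (i + 1))⁻¹ * g i ∈ Gc.sub i := hg' i (i + 1) (Nat.le_succ i)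
    have key : (g i)⁻¹ * x * g i
        = ((g (i + 1))⁻¹ * g i)⁻¹ * ((g (i + 1))⁻¹ * x * g (i + 1)) * ((g (i + 1))⁻¹ * g i) := by
      group
    rw [key]
    exact mul_mem (mul_mem (inv_mem h1) (Gc.antitone (Nat.le_succ i) hx)) h1
  have hHanti : Antitone H := antitone_nat_of_succ_le part1
  -- forward coordinate map
  let fwd : ∀ i, G ⧸ Gc.sub i → G ⧸ H i := fun i =>
    Quotient.map' (fun x => x * (g i)⁻¹) (fun a b hab => by
      rw [QuotientGroup.leftRel_apply] at hab ⊢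
      rw [mem_conjSubgroup]
      have key : (g i)⁻¹ * ((a * (g i)⁻¹)⁻¹ * (b * (g i)⁻¹)) * g i = a⁻¹ * b := by group
      rw [key]; exact hab)
  -- backward coordinate map
  let bwd : ∀ i, G ⧸ H i → G ⧸ Gc.sub i := fun i =>
    Quotient.map' (fun y => y * g i) (fun a b hab => by
      rw [QuotientGroup.leftRel_apply] at hab ⊢
      rw [mem_conjSubgroup] at hab
      have key : (a * g i)⁻¹ * (b * g i) = (g i)⁻¹ * (a⁻¹ * b) * g i := by group
      rw [key]; exact hab)
  have fwd_mk : ∀ i (x : G), fwd i (QuotientGroup.mk x) = QuotientGroup.mk (x * (g i)⁻¹) :=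
    fun _ _ => rfl
  have bwd_mk : ∀ i (y : G), bwd i (QuotientGroup.mk y) = QuotientGroup.mk (y * g i) :=
    fun _ _ => rfl
  -- forward map between inverse limits
  have compatF : ∀ (u : InvLim Gc.sub) i j, i ≤ j → ∀ hle : H j ≤ H i,
      cosetMap hle (fwd j (u.1 j)) = fwd i (u.1 i) := by
    intro u i j hij hle
    obtain ⟨x, hx⟩ := QuotientGroup.mk_surjective (u.1 j)
    have hui : u.1 i = QuotientGroup.mk x := by
      rw [← u.2 i j hij (Gc.antitone hij), ← hx, cosetMap_mk]
    rw [← hx, hui, fwd_mk, fwd_mk, cosetMap_mk]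
    refine QuotientGroup.eq.mpr ?_
    rw [mem_conjSubgroup]
    have key : (g i)⁻¹ * ((x * (g j)⁻¹)⁻¹ * (x * (g i)⁻¹)) * g i = ((g j)⁻¹ * g i)⁻¹ := by group
    rw [key]
    exact inv_mem (hg' i j hij)
  have compatB : ∀ (v : InvLim H) i j, i ≤ j → ∀ hle : Gc.sub j ≤ Gc.sub i,
      cosetMap hle (bwd j (v.1 j)) = bwd i (v.1 i) := by
    intro v i j hij hle
    obtain ⟨y, hy⟩ := QuotientGroup.mk_surjective (v.1 j)
    have hvi : v.1 i = QuotientGroup.mk y := by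
      rw [← v.2 i j hij (hHanti hij), ← hy, cosetMap_mk]
    rw [← hy, hvi, bwd_mk, bwd_mk, cosetMap_mk]
    refine QuotientGroup.eq.mpr ?_
    have key : (y * g j)⁻¹ * (y * g i) = (g j)⁻¹ * g i := by group
    rw [key]
    exact hg' i j hij
  let τf : InvLim Gc.sub → InvLim H := fun u =>
    ⟨fun i => fwd i (u.1 i), fun i j hij hle => compatF u i j hij hle⟩
  let σf : InvLim H → InvLim Gc.sub := fun v =>
    ⟨fun i => bwd i (v.1 i), fun i j hij hle => compatB v i j hij hle⟩
  have hleft : ∀ u, σf (τf u) = u := by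
    intro u
    apply Subtype.ext; funext i
    obtain ⟨x, hx⟩ := QuotientGroup.mk_surjective (u.1 i)
    show bwd i (fwd i (u.1 i)) = u.1 i
    rw [← hx, fwd_mk, bwd_mk, inv_mul_cancel_right]
  have hright : ∀ v, τf (σf v) = v := by
    intro v
    apply Subtype.ext; funext i
    obtain ⟨y, hy⟩ := QuotientGroup.mk_surjective (v.1 i)
    show fwd i (bwd i (v.1 i)) = v.1 i
    rw [← hy, bwd_mk, fwd_mk, mul_inv_cancel_right]
  have contF : Continuous τf :=
    Continuous.subtype_mk (continuous_pi fun i =>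
      continuous_of_discreteTopology.comp ((continuous_apply i).comp continuous_subtype_val)) _
  have contB : Continuous σf :=
    Continuous.subtype_mk (continuous_pi fun i =>
      continuous_of_discreteTopology.comp ((continuous_apply i).comp continuous_subtype_val)) _
  refine ⟨part1, ⟨⟨⟨τf, σf, hleft, hright⟩, contF, contB⟩, ?_, ?_⟩⟩
  · intro s u
    apply Subtype.ext; funext i
    obtain ⟨x, hx⟩ := QuotientGroup.mk_surjective (u.1 i)
    show fwd i ((s • u).1 i) = s • fwd i (u.1 i)
    rw [smul_coord, ← hx, MulAction.Quotient.smul_mk, fwd_mk, fwd_mk,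
      MulAction.Quotient.smul_mk, smul_eq_mul, smul_eq_mul, mul_assoc]
  · intro i
    show fwd i (QuotientGroup.mk 1) = QuotientGroup.mk (g i)⁻¹
    rw [fwd_mk, one_mul]

end CantorChains
end

section
/- Let C be a compact, metrizable, totally disconnected topological group, and let H be a closed subgroup of C. Then either H is finite, or H (with the subspace topology) is homeomorphic to the Cantor set, i.e., H is a nonempty compact metrizable totally disconnected perfect space. -/
namespace MulAction.IsPretransitive

/-- Translates of an isolated point are isolated, and they cover a homogeneous space. -/
theorem perfectSpace_of_not_discreteTopology (G : Type*) {X : Type*} [Group G] [MulAction G X]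
    [IsPretransitive G X] [TopologicalSpace X] [ContinuousConstSMul G X] (h : ¬DiscreteTopology X) :
    PerfectSpace X := by
  rw [perfectSpace_iff_forall_not_isolated]
  intro x
  rw [Filter.neBot_iff, Ne, ← isOpen_singleton_iff_punctured_nhds]
  exact fun hx ↦ h ((discreteTopology_iff G x).mpr hx)

theorem perfectSpace_of_infinite (G : Type*) {X : Type*} [Group G] [MulAction G X]
    [IsPretransitive G X] [TopologicalSpace X] [ContinuousConstSMul G X] [CompactSpace X]
    [Infinite X] : PerfectSpace X :=
  perfectSpace_of_not_discreteTopology G fun _ ↦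
    (finite_of_compact_of_discrete (X := X)).false

end MulAction.IsPretransitive

/-- A closed subgroup of a compact, metrizable, totally disconnected
topological group is either finite, or its underlying space is a Cantor set, i.e. a
nonempty, compact, metrizable, totally disconnected, perfect space. -/
theorem closed_subgroup_finite_or_cantor {C : Type*} [Group C] [TopologicalSpace C]
    [IsTopologicalGroup C] [CompactSpace C] [TopologicalSpace.MetrizableSpace C]
    [TotallyDisconnectedSpace C]
    (H : Subgroup C) (hH : IsClosed (H : Set C)) :
    Finite H ∨ (Nonempty H ∧ CompactSpace H ∧ TopologicalSpace.MetrizableSpace H ∧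
      TotallyDisconnectedSpace H ∧ PerfectSpace H) := by
  rcases finite_or_infinite H with hfin | _
  · exact Or.inl hfin
  have : CompactSpace H := isCompact_iff_compactSpace.mp hH.isCompact
  exact Or.inr ⟨One.instNonempty, ‹_›, Topology.IsEmbedding.subtypeVal.metrizableSpace,
    inferInstance, MulAction.IsPretransitive.perfectSpace_of_infinite H⟩
end

section
/- Let (X,G,Φ) be an equicontinuous Cantor minimal system with Ellis group Ḡ, let x ∈ X, let Ḡ_x be the isotropy subgroup of x, and let N̂(Ḡ_x) be the normalizer of Ḡ_x in Ḡ. Then the set of orbits of the action of Aut(X,G,Φ) on X is in bijection with the coset space Ḡ/N̂(Ḡ_x); in particular, the number of orbits of Aut(X,G,Φ) equals the index of N̂(Ḡ_x) in Ḡ. -/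
/-!
The Ellis group `Ḡ` is compact (Arzelà–Ascoli), so by minimality the orbit map `k ↦ k x` is a
surjective quotient map `Ḡ → X`. An automorphism `h` commutes with `Φ(G)`, hence with its closure
`Ḡ`; so `h` preserves stabilizers, and writing `h x = m x` forces `m` to normalize `Ḡ_x`, with
`h (k x) = k m x`. Conversely each `n` normalizing `Ḡ_x` descends along the quotient map to the
automorphism `k x ↦ k n x`. Hence `k x` and `k' x` lie in one `Aut`-orbit iff `k⁻¹ k' ∈ N̂(Ḡ_x)`.
-/

section

open Set Topology

namespace MulAction

variable {K X : Type*} [Group K] [MulAction K X]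

theorem mem_normalizer_stabilizer_iff {x : X} {n : K} :
    n ∈ Subgroup.normalizer (stabilizer K x : Set K) ↔ stabilizer K (n • x) = stabilizer K x := by
  rw [Subgroup.mem_normalizer_iff_map_conj_eq, stabilizer_smul_eq_stabilizer_map_conj]
  rfl

theorem smul_eq_smul_of_stabilizer_le {x y : X} (hxy : stabilizer K x ≤ stabilizer K y)
    {k k' : K} (hk : k • x = k' • x) : k • y = k' • y := by
  have hx : k'⁻¹ * k ∈ stabilizer K x := by rw [mem_stabilizer_iff, mul_smul, hk, inv_smul_smul]
  have hy := hxy hx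
  rwa [mem_stabilizer_iff, mul_smul, inv_smul_eq_iff] at hy

variable {A : Type*} [Group A] [MulAction A X] [SMulCommClass K A X] [IsPretransitive K X] {x : X}

theorem exists_smul_smul_eq_iff
    (hN : ∀ n ∈ Subgroup.normalizer (stabilizer K x : Set K), ∃ a : A, a • x = n • x)
    (k k' : K) :
    (∃ a : A, a • k • x = k' • x) ↔ k⁻¹ * k' ∈ Subgroup.normalizer (stabilizer K x : Set K) := by
  constructor
  · rintro ⟨a, ha⟩
    obtain ⟨m, hm⟩ := exists_smul_eq K x (a • x)
    have hmN : m ∈ Subgroup.normalizer (stabilizer K x : Set K) := by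
      rw [mem_normalizer_stabilizer_iff, hm, stabilizer_smul_eq_right]
    have hstab : (k * m)⁻¹ * k' ∈ stabilizer K x := by
      rw [mem_stabilizer_iff, mul_smul, inv_smul_eq_iff, ← ha, ← smul_comm, ← hm, mul_smul]
    have hsplit : k⁻¹ * k' = m * ((k * m)⁻¹ * k') := by group
    rw [hsplit]
    exact mul_mem hmN (Subgroup.le_normalizer hstab)
  · intro hn
    obtain ⟨a, ha⟩ := hN _ hn
    exact ⟨a, by rw [← smul_comm, ha, smul_smul, mul_inv_cancel_left]⟩

noncomputable def quotientNormalizerEquivOrbits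
    (hN : ∀ n ∈ Subgroup.normalizer (stabilizer K x : Set K), ∃ a : A, a • x = n • x) :
    K ⧸ Subgroup.normalizer (stabilizer K x : Set K) ≃ Quotient (orbitRel A X) :=
  Equiv.ofBijective
    (Quotient.map' (· • x) fun k k' hkk' => by
      rw [orbitRel_apply, mem_orbit_symm]
      exact (exists_smul_smul_eq_iff hN k k').mpr (QuotientGroup.leftRel_apply.mp hkk'))
    ⟨by
      rintro ⟨k⟩ ⟨k'⟩ h
      refine Quotient.sound' (QuotientGroup.leftRel_apply.mpr ?_)
      exact (exists_smul_smul_eq_iff hN k k').mp (mem_orbit_symm.mp (Quotient.exact' h)),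
    by
      rintro ⟨y⟩
      obtain ⟨k, rfl⟩ := exists_smul_eq K x y
      exact ⟨QuotientGroup.mk k, rfl⟩⟩

end MulAction

theorem Continuous.surjective_of_denseRange {α β : Type*} [TopologicalSpace α] [CompactSpace α]
    [TopologicalSpace β] [T2Space β] {f : α → β} (hf : Continuous f) (hd : DenseRange f) :
    Function.Surjective f :=
  range_eq_univ.mp (by rw [← hd.closure_range, (isCompact_range hf).isClosed.closure_eq])

theorem ContinuousMap.isCompact_closure_range_of_equicontinuous {ι X α : Type*}
    [TopologicalSpace X] [UniformSpace α] [CompactSpace α] {F : ι → C(X, α)}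
    (hF : Equicontinuous fun i => ⇑(F i)) : IsCompact (closure (range F)) := by
  set P : Set (X → α) := closure (range fun i => ⇑(F i))
  have hPeq : P.Equicontinuous := (equicontinuous_iff_range.mp hF).closure
  set S : Set C(X, α) := (⇑) ⁻¹' P
  have hSP : ContinuousMap.toFun '' S = P :=
    (image_preimage_subset _ _).antisymm fun f hf => ⟨⟨f, hPeq.continuous_of_mem hf⟩, hf, rfl⟩
  have hS : IsCompact S := ArzelaAscoli.isCompact_of_equicontinuous S
    (hSP ▸ isClosed_closure.isCompact) (hPeq.comp fun f : S => (⟨f, f.2⟩ : P))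
  refine hS.of_isClosed_subset isClosed_closure (closure_minimal ?_
    (isClosed_closure.preimage continuous_coeFun))
  rintro _ ⟨i, rfl⟩
  exact subset_closure ⟨i, rfl⟩

theorem MulAction.exists_homeomorph_smul_eq {K X : Type*} [Group K] [TopologicalSpace K]
    [TopologicalSpace X] [MulAction K X] {x y : X} (hx : IsQuotientMap fun k : K => k • x)
    (hy : IsQuotientMap fun k : K => k • y) (hxy : stabilizer K x = stabilizer K y) :
    ∃ θ : X ≃ₜ X, θ x = y ∧ ∀ (k : K) (z : X), θ (k • z) = k • θ z := by
  let πx : C(K, X) := ⟨(· • x), hx.continuous⟩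
  let πy : C(K, X) := ⟨(· • y), hy.continuous⟩
  have hfac : Function.FactorsThrough πy πx := fun _ _ h => smul_eq_smul_of_stabilizer_le hxy.le h
  have hfac' : Function.FactorsThrough πx πy := fun _ _ h => smul_eq_smul_of_stabilizer_le hxy.ge h
  let φ := IsQuotientMap.lift (f := πx) hx πy hfac
  let ψ := IsQuotientMap.lift (f := πy) hy πx hfac'
  have hφ (k : K) : φ (k • x) = k • y := DFunLike.congr_fun (IsQuotientMap.lift_comp hx πy hfac) k
  have hψ (k : K) : ψ (k • y) = k • x := DFunLike.congr_fun (IsQuotientMap.lift_comp hy πx hfac') k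
  refine ⟨⟨⟨φ, ψ, fun z => ?_, fun z => ?_⟩, φ.continuous, ψ.continuous⟩, ?_, fun k z => ?_⟩
  · obtain ⟨k, rfl⟩ := hx.surjective z
    simp only [hφ, hψ]
  · obtain ⟨k, rfl⟩ := hy.surjective z
    simp only [hφ, hψ]
  · simpa using hφ 1
  · obtain ⟨k', rfl⟩ := hx.surjective z
    change φ (k • k' • x) = k • φ (k' • x)
    rw [smul_smul, hφ, hφ, mul_smul]

namespace CantorChains

variable {X : Type*}

theorem isInducing_toContinuousMap [TopologicalSpace X] :
    IsInducing fun h : X ≃ₜ X => (h : C(X, X)) := ⟨rfl⟩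

theorem continuous_apply_homeomorph [TopologicalSpace X] (y : X) :
    Continuous fun h : X ≃ₜ X => h y :=
  (continuous_eval_const (F := C(X, X)) y).comp isInducing_toContinuousMap.continuous

theorem isClosed_setOf_commute_apply [TopologicalSpace X] [T2Space X] (a : X ≃ₜ X) :
    IsClosed {h : X ≃ₜ X | ∀ y, a (h y) = h (a y)} := by
  simp only [ofPred_forall]
  exact isClosed_iInter fun y =>
    isClosed_eq (a.continuous.comp (continuous_apply_homeomorph y)) (continuous_apply_homeomorph _)

variable {G : Type*} [Group G]

section Ellis

variable [TopologicalSpace X] (Φ : G →* (X ≃ₜ X)) {E : Subgroup (X ≃ₜ X)}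

theorem apply_mem_of_eq_closure (hE : (E : Set (X ≃ₜ X)) = closure (range fun g => Φ g))
    (g : G) : Φ g ∈ E := by
  rw [← SetLike.mem_coe, hE]
  exact subset_closure (mem_range_self g)

theorem mem_autGroup_iff [T2Space X] (hE : (E : Set (X ≃ₜ X)) = closure (range fun g => Φ g))
    {h : X ≃ₜ X} :
    h ∈ autGroup Φ ↔ ∀ k ∈ E, ∀ y, h (k y) = k (h y) :=
  ⟨fun hh k hk => by
      rw [← SetLike.mem_coe, hE] at hk
      exact closure_minimal (t := {h' : X ≃ₜ X | ∀ y, h (h' y) = h' (h y)})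
        (range_subset_iff.mpr fun g y => hh g y) (isClosed_setOf_commute_apply h) hk,
    fun hh g y => hh (Φ g) (apply_mem_of_eq_closure Φ hE g) y⟩

theorem isQuotientMap_smul [T2Space X] [CompactSpace E]
    (hE : (E : Set (X ≃ₜ X)) = closure (range fun g => Φ g)) {y : X}
    (hy : Dense (range fun g => Φ g y)) : IsQuotientMap fun k : E => k • y := by
  have hcont : Continuous fun k : E => k • y :=
    (continuous_apply_homeomorph y).comp continuous_subtype_val
  have hdense : DenseRange fun k : E => k • y :=
    hy.mono (range_subset_iff.mpr fun g => ⟨⟨Φ g, apply_mem_of_eq_closure Φ hE g⟩, rfl⟩)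
  exact hcont.isClosedMap.isQuotientMap hcont (hcont.surjective_of_denseRange hdense)

end Ellis

section Equicontinuous

variable [MetricSpace X] [CompactSpace X] (Φ : G →* (X ≃ₜ X))

theorem injective_of_mem_closure_range (hΦ : UniformEquicontinuous fun g => ⇑(Φ g))
    {f : C(X, X)} (hf : f ∈ closure (range fun g => (Φ g : C(X, X)))) : Function.Injective f := by
  intro y z hyz
  by_contra hne
  obtain ⟨δ, hδ, hδΦ⟩ := Metric.uniformEquicontinuous_iff.mp hΦ (dist y z) (dist_pos.mpr hne)
  obtain ⟨_, ⟨g, rfl⟩, hg⟩ := Metric.mem_closure_iff.mp hf (δ / 2) (half_pos hδ)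
  have hclose : dist (Φ g y) (Φ g z) < δ :=
    calc dist (Φ g y) (Φ g z) ≤ dist (Φ g y) (f y) + dist (f z) (Φ g z) := by
          rw [hyz]; exact dist_triangle _ _ _
      _ ≤ dist f (Φ g : C(X, X)) + dist f (Φ g : C(X, X)) := by
          rw [dist_comm (Φ g y)]
          exact add_le_add (ContinuousMap.dist_apply_le_dist (g := (Φ g : C(X, X))) y)
            (ContinuousMap.dist_apply_le_dist (g := (Φ g : C(X, X))) z)
      _ < δ := by linarith
  have hinv (w : X) : Φ g⁻¹ (Φ g w) = w := by rw [map_inv]; exact (Φ g).symm_apply_apply w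
  have := hδΦ _ _ hclose g⁻¹
  rw [hinv, hinv] at this
  exact lt_irrefl _ this

theorem surjective_of_mem_closure_range {f : C(X, X)}
    (hf : f ∈ closure (range fun g => (Φ g : C(X, X)))) : Function.Surjective f := by
  refine f.continuous.surjective_of_denseRange (Metric.dense_iff.mpr fun z ε hε => ?_)
  obtain ⟨_, ⟨g, rfl⟩, hg⟩ := Metric.mem_closure_iff.mp hf ε hε
  refine ⟨f ((Φ g).symm z), ?_, mem_range_self _⟩
  calc dist (f ((Φ g).symm z)) z = dist (f ((Φ g).symm z)) (Φ g ((Φ g).symm z)) := by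
        rw [(Φ g).apply_symm_apply]
    _ ≤ dist f (Φ g : C(X, X)) := ContinuousMap.dist_apply_le_dist (g := (Φ g : C(X, X))) _
    _ < ε := hg

theorem closure_range_subset_range_toContinuousMap
    (hΦ : UniformEquicontinuous fun g => ⇑(Φ g)) :
    closure (range fun g => (Φ g : C(X, X))) ⊆ range fun h : X ≃ₜ X => (h : C(X, X)) := by
  intro f hf
  let e : X ≃ X :=
    .ofBijective f ⟨injective_of_mem_closure_range Φ hΦ hf, surjective_of_mem_closure_range Φ hf⟩
  exact ⟨(show Continuous e from f.continuous).homeoOfEquivCompactToT2, rfl⟩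

theorem compactSpace_of_eq_closure (hΦ : UniformEquicontinuous fun g => ⇑(Φ g))
    {E : Subgroup (X ≃ₜ X)} (hE : (E : Set (X ≃ₜ X)) = closure (range fun g => Φ g)) :
    CompactSpace E := by
  refine isCompact_iff_compactSpace.mp ?_
  rw [isInducing_toContinuousMap.isCompact_iff, hE,
    isInducing_toContinuousMap.closure_eq_preimage_closure_image, ← range_comp',
    image_preimage_eq_of_subset (closure_range_subset_range_toContinuousMap Φ hΦ)]
  exact ContinuousMap.isCompact_closure_range_of_equicontinuous hΦ.equicontinuous

end Equicontinuous

end CantorChains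

end

namespace CantorChains

theorem card_orbits_eq_index_normalizer_general {G X : Type*} [Group G] [MetricSpace X]
    [CompactSpace X]
    (Φ : G →* (X ≃ₜ X))
    (hmin : ∀ y : X, Dense (Set.range fun g : G => Φ g y))
    (heq : ∀ ε > 0, ∃ δ > 0, ∀ (g : G) (y z : X), dist y z < δ → dist (Φ g y) (Φ g z) < ε)
    (E : Subgroup (X ≃ₜ X))
    (hE : (E : Set (X ≃ₜ X)) = closure (Set.range fun g : G => Φ g))
    (x : X) :
    Nonempty (Quotient (MulAction.orbitRel ↥(autGroup Φ) X) ≃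
        (↥E ⧸ Subgroup.normalizer (MulAction.stabilizer ↥E x : Set ↥E))) ∧
    Nat.card (Quotient (MulAction.orbitRel ↥(autGroup Φ) X)) =
      (Subgroup.normalizer (MulAction.stabilizer ↥E x : Set ↥E)).index := by
  have hΦ : UniformEquicontinuous fun g => ⇑(Φ g) :=
    Metric.uniformEquicontinuous_iff.mpr fun ε hε =>
      (heq ε hε).imp fun _ ⟨hδ, h⟩ => ⟨hδ, fun y z hyz g => h g y z hyz⟩
  have := compactSpace_of_eq_closure Φ hΦ hE
  have hquot (y : X) : Topology.IsQuotientMap fun k : E => k • y := isQuotientMap_smul Φ hE (hmin y)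
  have : MulAction.IsPretransitive E X := ⟨fun y => (hquot y).surjective⟩
  have : SMulCommClass E (autGroup Φ) X :=
    ⟨fun k a y => ((mem_autGroup_iff Φ hE).mp a.2 k k.2 y).symm⟩
  have hN : ∀ n ∈ Subgroup.normalizer (MulAction.stabilizer E x : Set E),
      ∃ a : autGroup Φ, a • x = n • x := fun n hn => by
    obtain ⟨θ, hθx, hθ⟩ := MulAction.exists_homeomorph_smul_eq (hquot x) (hquot (n • x))
      (MulAction.mem_normalizer_stabilizer_iff.mp hn).symm
    exact ⟨⟨θ, (mem_autGroup_iff Φ hE).mpr fun k hk => hθ ⟨k, hk⟩⟩, hθx⟩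
  let e := (MulAction.quotientNormalizerEquivOrbits hN).symm
  exact ⟨⟨e⟩, Nat.card_congr e⟩

/-- For an equicontinuous Cantor minimal system with Ellis group `Ḡ`,
the set of orbits of `Aut(X,G,Φ)` on `X` is in bijection with the coset space
`Ḡ/N̂(Ḡ_x)`; in particular the number of orbits equals the index of the normalizer
`N̂(Ḡ_x)` in `Ḡ`. -/
theorem card_orbits_eq_index_normalizer {G X : Type*} [Group G] [MetricSpace X]
    [CompactSpace X] [TotallyDisconnectedSpace X] [PerfectSpace X] [Nonempty X]
    (Φ : G →* (X ≃ₜ X))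
    (hmin : ∀ y : X, Dense (Set.range fun g : G => Φ g y))
    (heq : ∀ ε > 0, ∃ δ > 0, ∀ (g : G) (y z : X), dist y z < δ → dist (Φ g y) (Φ g z) < ε)
    (E : Subgroup (X ≃ₜ X))
    (hE : (E : Set (X ≃ₜ X)) = closure (Set.range fun g : G => Φ g))
    (x : X) :
    Nonempty (Quotient (MulAction.orbitRel ↥(autGroup Φ) X) ≃
        (↥E ⧸ Subgroup.normalizer (MulAction.stabilizer ↥E x : Set ↥E))) ∧
    Nat.card (Quotient (MulAction.orbitRel ↥(autGroup Φ) X)) =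
      (Subgroup.normalizer (MulAction.stabilizer ↥E x : Set ↥E)).index :=
  card_orbits_eq_index_normalizer_general Φ hmin heq E hE x

end CantorChains
end

section
/- Let (X,G,Φ) be an equicontinuous Cantor minimal system with Ellis group Ḡ, let x ∈ X, and suppose the normalizer N̂(Ḡ_x) of the isotropy subgroup Ḡ_x has finite index in Ḡ. Then every orbit of the action of Aut(X,G,Φ) on X is a closed and open subset of X. -/
/-!
The Ellis group `E` is compact: by Arzelà–Ascoli the maps `Φ g` have compact closure in `C(X, X)`,
and a limit of `Φ g` comes with a limit of `Φ g⁻¹` that is its inverse. So `E` acts transitively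
on `X` and `g ↦ g • x` is a quotient map `E → X`. Automorphisms are exactly the homeomorphisms
commuting with `E`, and two points lie in the same automorphism orbit iff they have the same
stabilizer in `E`: automorphisms preserve stabilizers, and conversely equal stabilizers let
`g • y ↦ g • z` descend along the quotient map. Hence the orbit of `y` is the image of the
normalizer of `E_y`, which is closed, hence compact; and the orbits are indexed by the cosets of
the normalizer of `E_x`. Finitely many closed orbits partition `X`, so each of them is open too.
-/

namespace CantorChains

open Topology MulAction

section GroupAction

variable {G α : Type*} [Group G] [MulAction G α]

theorem mem_normalizer_stabilizer_iff {x : α} {g : G} :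
    g ∈ Subgroup.normalizer (stabilizer G x : Set G) ↔ stabilizer G (g • x) = stabilizer G x := by
  rw [Subgroup.mem_normalizer_iff_map_conj_eq, stabilizer_smul_eq_stabilizer_map_conj]
  rfl

theorem smul_eq_smul_of_stabilizer_le {x y : α} (h : stabilizer G x ≤ stabilizer G y) {g g' : G}
    (hg : g • x = g' • x) : g • y = g' • y := by
  have hx : g'⁻¹ * g ∈ stabilizer G x := by rw [mem_stabilizer_iff, mul_smul, hg, inv_smul_smul]
  have hy := h hx
  rwa [mem_stabilizer_iff, mul_smul, inv_smul_eq_iff] at hy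

theorem stabilizer_smul_of_mem_centralizer {E : Subgroup G} {a : G}
    (ha : a ∈ Subgroup.centralizer (E : Set G)) (y : α) :
    stabilizer E (a • y) = stabilizer E y := by
  ext g
  rw [mem_stabilizer_iff, mem_stabilizer_iff, Subgroup.smul_def, Subgroup.smul_def, smul_smul,
    Subgroup.mem_centralizer_iff.1 ha g g.2, mul_smul, smul_left_cancel_iff]

theorem isClopen_orbit_of_finite [TopologicalSpace α] [Finite (orbitRel.Quotient G α)]
    (h : ∀ y : α, IsClosed (orbit G y)) (y : α) : IsClopen (orbit G y) := by
  have hcompl : (orbit G y)ᶜ = ⋃ q : {q : orbitRel.Quotient G α // q ≠ ⟦y⟧}, q.1.orbit := by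
    ext z
    simp [orbitRel.Quotient.mem_orbit, Quotient.eq'', orbitRel_apply]
  refine ⟨h y, ?_⟩
  rw [← isClosed_compl_iff, hcompl]
  exact isClosed_iUnion_of_finite fun q => q.1.orbit_eq_orbit_out Quotient.out_eq' ▸ h _

theorem isPretransitive_of_dense_orbit [TopologicalSpace G] [CompactSpace G] [TopologicalSpace α]
    [T2Space α] [ContinuousSMul G α] {x : α} (h : Dense (orbit G x)) : IsPretransitive G α := by
  have hclosed : IsClosed (orbit G x) :=
    (isCompact_range (continuous_id.smul continuous_const)).isClosed
  rw [isPretransitive_iff_orbit_eq_univ x, ← hclosed.closure_eq, h.closure_eq]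

theorem isClosed_stabilizer [TopologicalSpace G] [TopologicalSpace α] [T2Space α]
    [ContinuousSMul G α] (x : α) : IsClosed (stabilizer G x : Set G) :=
  isClosed_eq (continuous_id.smul continuous_const) continuous_const

end GroupAction

theorem isTopologicalGroup_of_compactSpace {M : Type*} [Group M] [TopologicalSpace M]
    [CompactSpace M] [T2Space M] [ContinuousMul M] : IsTopologicalGroup M := by
  refine { continuous_inv := continuous_iff_isClosed.2 fun C hC => ?_ }
  -- the preimage of `C` under inversion is the projection of a closed subset of `M × M`
  have hgraph : IsClosed {p : M × M | p.1 * p.2 = 1 ∧ p.2 ∈ C} :=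
    (isClosed_eq continuous_mul continuous_const).inter (hC.preimage continuous_snd)
  convert isClosedMap_fst_of_compactSpace _ hgraph using 1
  ext g
  refine ⟨fun hg => ⟨(g, g⁻¹), ⟨mul_inv_cancel g, hg⟩, rfl⟩, ?_⟩
  rintro ⟨⟨a, b⟩, ⟨hab, hb⟩, rfl⟩
  rwa [eq_inv_of_mul_eq_one_right hab] at hb

theorem isClosed_normalizer_of_isClosed {M : Type*} [Group M] [TopologicalSpace M]
    [IsTopologicalGroup M] {H : Subgroup M} (hH : IsClosed (H : Set M)) :
    IsClosed (Subgroup.normalizer (H : Set M) : Set M) := by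
  have hN : (Subgroup.normalizer (H : Set M) : Set M) =
      (⋂ h ∈ H, (fun g => g * h * g⁻¹) ⁻¹' H) ∩ (⋂ h ∈ H, (fun g => g⁻¹ * h * g) ⁻¹' H) := by
    ext g
    simp only [SetLike.mem_coe, Set.mem_inter_iff, Set.mem_iInter, Set.mem_preimage]
    refine ⟨fun hg => ⟨fun h hh => (Subgroup.mem_normalizer_iff.1 hg h).1 hh,
      fun h hh => (Subgroup.mem_normalizer_iff''.1 hg h).1 hh⟩, fun ⟨hg, hg'⟩ => ?_⟩
    refine Subgroup.mem_normalizer_iff.2 fun h => ⟨hg h, fun hh => ?_⟩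
    simpa [mul_assoc] using hg' _ hh
  rw [hN]
  exact .inter (isClosed_biInter fun h _ => hH.preimage (by fun_prop))
    (isClosed_biInter fun h _ => hH.preimage (by fun_prop))

theorem centralizer_closure_eq {M : Type*} [Mul M] [TopologicalSpace M]
    [SeparatelyContinuousMul M] [T2Space M] (s : Set M) :
    Set.centralizer (closure s) = Set.centralizer s := by
  refine (Set.centralizer_subset subset_closure).antisymm fun a ha m hm => ?_
  have hs : s ⊆ Set.centralizer {a} := fun m hm' => by
    simpa [Set.mem_centralizer_iff, eq_comm] using ha m hm'
  simpa [Set.mem_centralizer_iff, eq_comm] using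
    closure_minimal hs (Set.isClosed_centralizer _) hm

theorem isCompact_closure_range_of_equicontinuous {ι X Y : Type*} [TopologicalSpace X]
    [CompactSpace X] [MetricSpace Y] [CompactSpace Y] (F : ι → C(X, Y))
    (hF : Equicontinuous fun i => ⇑(F i)) : IsCompact (closure (Set.range F)) := by
  let e := (ContinuousMap.isometryEquivBoundedOfCompact X Y).toHomeomorph
  have hA : IsCompact (closure (Set.range (e ∘ F))) := by
    refine BoundedContinuousFunction.arzela_ascoli Set.univ isCompact_univ _
      (fun _ _ _ => Set.mem_univ _) ?_
    rintro x U hU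
    filter_upwards [hF x U hU] with y hy
    rintro ⟨_, i, rfl⟩
    exact hy i
  rw [Set.range_comp, ← e.image_closure] at hA
  exact e.isCompact_image.1 hA

section HomeomorphGroup

variable {X : Type*} [TopologicalSpace X]

theorem isEmbedding_toContinuousMap : IsEmbedding (fun h : X ≃ₜ X => (h : C(X, X))) :=
  ⟨⟨rfl⟩, fun _ _ h => Homeomorph.ext (ContinuousMap.congr_fun h)⟩

instance [T2Space X] : T2Space (X ≃ₜ X) := isEmbedding_toContinuousMap.t2Space

variable [LocallyCompactSpace X]

instance : ContinuousMul (X ≃ₜ X) :=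
  ⟨isEmbedding_toContinuousMap.continuous_iff.2 <| ContinuousMap.continuous_comp'.comp <|
    (isEmbedding_toContinuousMap.continuous.comp continuous_snd).prodMk
      (isEmbedding_toContinuousMap.continuous.comp continuous_fst)⟩

instance : ContinuousSMul (X ≃ₜ X) X :=
  ⟨(continuous_eval : Continuous fun p : C(X, X) × X => p.1 p.2).comp <|
    (isEmbedding_toContinuousMap.continuous.comp continuous_fst).prodMk continuous_snd⟩

variable [T2Space X]

theorem autGroup_eq_centralizer_closure {G : Type*} [Group G] (Φ : G →* (X ≃ₜ X)) :
    autGroup Φ = Subgroup.centralizer (closure (Set.range Φ)) := by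
  refine SetLike.ext' ((centralizer_closure_eq _).trans (Set.ext fun h => ?_)).symm
  simp only [Set.mem_centralizer_iff, Set.forall_mem_range]
  exact ⟨fun hh g y => (DFunLike.congr_fun (hh g) y).symm,
    fun hh g => Homeomorph.ext fun y => (hh g y).symm⟩

theorem isCompact_closure_of_isCompact_closure_image (Γ : Subgroup (X ≃ₜ X))
    (hΓ : IsCompact (closure ((fun h : X ≃ₜ X => (h : C(X, X))) '' Γ))) :
    IsCompact (closure (Γ : Set (X ≃ₜ X))) := by
  set ι : (X ≃ₜ X) → C(X, X) := fun h => h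
  -- limits of the pairs `(h, h⁻¹)` are pairs of mutually inverse maps
  set P := closure ((fun h => (ι h, ι h⁻¹)) '' (Γ : Set (X ≃ₜ X)))
  have hPcompact : IsCompact P := by
    refine (hΓ.prod hΓ).of_isClosed_subset isClosed_closure (closure_minimal ?_
      (isClosed_closure.prod isClosed_closure))
    rintro _ ⟨h, hh, rfl⟩
    exact ⟨subset_closure ⟨h, hh, rfl⟩, subset_closure ⟨h⁻¹, Γ.inv_mem hh, rfl⟩⟩
  have hPinv : P ⊆ {p | p.1.comp p.2 = .id X ∧ p.2.comp p.1 = .id X} := by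
    refine closure_minimal ?_ <|
      (isClosed_eq (ContinuousMap.continuous_comp'.comp continuous_swap) continuous_const).inter
        (isClosed_eq ContinuousMap.continuous_comp' continuous_const)
    rintro _ ⟨h, -, rfl⟩
    exact ⟨ContinuousMap.ext h.apply_symm_apply, ContinuousMap.ext h.symm_apply_apply⟩
  have hrange : closure (ι '' Γ) ⊆ Set.range ι := by
    have hfst : closure (ι '' Γ) ⊆ Prod.fst '' P :=
      closure_minimal (fun _ ⟨h, hh, e⟩ => ⟨_, subset_closure ⟨h, hh, rfl⟩, e⟩)
        (hPcompact.image continuous_fst).isClosed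
    rintro f hf
    obtain ⟨⟨f, f'⟩, hp, rfl⟩ := hfst hf
    obtain ⟨h₁, h₂⟩ := hPinv hp
    exact ⟨{ toFun := f
             invFun := f'
             left_inv := ContinuousMap.congr_fun h₂
             right_inv := ContinuousMap.congr_fun h₁ }, rfl⟩
  rw [isEmbedding_toContinuousMap.isCompact_iff,
    isEmbedding_toContinuousMap.closure_eq_preimage_closure_image,
    Set.image_preimage_eq_of_subset hrange]
  exact hΓ

end HomeomorphGroup

theorem isCompact_closure_range_of_equicontinuous_homeomorph {G X : Type*} [Group G]
    [MetricSpace X] [CompactSpace X] (Φ : G →* (X ≃ₜ X))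
    (hΦ : Equicontinuous fun g => ⇑(Φ g)) : IsCompact (closure (Set.range Φ)) := by
  rw [← MonoidHom.coe_range]
  refine isCompact_closure_of_isCompact_closure_image Φ.range ?_
  rw [MonoidHom.coe_range, ← Set.range_comp]
  exact isCompact_closure_range_of_equicontinuous _ hΦ

section EquivariantMaps

variable {X : Type*} [TopologicalSpace X] [LocallyCompactSpace X] {E : Subgroup (X ≃ₜ X)}

def orbitMap (y : X) : C(E, X) := ⟨fun g => g • y, continuous_id.smul continuous_const⟩

theorem factorsThrough_orbitMap {y z : X} (h : stabilizer E y ≤ stabilizer E z) :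
    Function.FactorsThrough (orbitMap z) (orbitMap (E := E) y) :=
  fun _ _ => smul_eq_smul_of_stabilizer_le h

variable [T2Space X] [CompactSpace E]

theorem isClosed_normalizer_stabilizer (y : X) :
    IsClosed (Subgroup.normalizer (stabilizer E y : Set E) : Set E) :=
  have : ContinuousMul E := E.toSubmonoid.continuousMul
  have := isTopologicalGroup_of_compactSpace (M := E)
  isClosed_normalizer_of_isClosed (isClosed_stabilizer y)

variable [IsPretransitive E X]

theorem isQuotientMap_orbitMap (y : X) : IsQuotientMap (orbitMap (E := E) y) :=
  .of_surjective_continuous (exists_smul_eq E y) (orbitMap y).continuous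

noncomputable def equivariantMap {y z : X} (h : stabilizer E y ≤ stabilizer E z) : C(X, X) :=
  (isQuotientMap_orbitMap y).lift (orbitMap z) (factorsThrough_orbitMap h)

theorem equivariantMap_smul {y z : X} (h : stabilizer E y ≤ stabilizer E z) (g : E) :
    equivariantMap h (g • y) = g • z :=
  DFunLike.congr_fun
    ((isQuotientMap_orbitMap y).lift_comp (orbitMap z) (factorsThrough_orbitMap h)) g

noncomputable def equivariantHomeomorph {y z : X} (h : stabilizer E y = stabilizer E z) :
    X ≃ₜ X where
  toFun := equivariantMap h.le
  invFun := equivariantMap h.ge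
  left_inv w := by
    obtain ⟨g, rfl⟩ := exists_smul_eq E y w
    rw [equivariantMap_smul, equivariantMap_smul]
  right_inv w := by
    obtain ⟨g, rfl⟩ := exists_smul_eq E z w
    rw [equivariantMap_smul, equivariantMap_smul]

theorem equivariantHomeomorph_smul {y z : X} (h : stabilizer E y = stabilizer E z) (g : E) :
    equivariantHomeomorph h (g • y) = g • z :=
  equivariantMap_smul h.le g

theorem equivariantHomeomorph_mem_centralizer {y z : X} (h : stabilizer E y = stabilizer E z) :
    equivariantHomeomorph h ∈ Subgroup.centralizer (E : Set (X ≃ₜ X)) := by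
  refine Subgroup.mem_centralizer_iff.2 fun k hk => Homeomorph.ext fun w => ?_
  obtain ⟨g, rfl⟩ := exists_smul_eq E y w
  have hkg := equivariantHomeomorph_smul h (⟨k, hk⟩ * g)
  rw [mul_smul] at hkg
  rw [homeo_mul_apply, homeo_mul_apply, equivariantHomeomorph_smul]
  exact hkg.symm

theorem mem_orbit_centralizer_iff {y z : X} :
    z ∈ orbit (Subgroup.centralizer (E : Set (X ≃ₜ X))) y ↔ stabilizer E z = stabilizer E y := by
  refine ⟨?_, fun h => ?_⟩
  · rintro ⟨a, rfl⟩
    exact stabilizer_smul_of_mem_centralizer a.2 y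
  · refine ⟨⟨_, equivariantHomeomorph_mem_centralizer h.symm⟩, ?_⟩
    simpa using equivariantHomeomorph_smul h.symm 1

theorem orbit_centralizer_eq_image (y : X) :
    orbit (Subgroup.centralizer (E : Set (X ≃ₜ X))) y =
      orbitMap y '' (Subgroup.normalizer (stabilizer E y : Set E) : Set E) := by
  ext z
  rw [mem_orbit_centralizer_iff]
  refine ⟨fun h => ?_, ?_⟩
  · obtain ⟨g, rfl⟩ := exists_smul_eq E y z
    exact ⟨g, mem_normalizer_stabilizer_iff.2 h, rfl⟩
  · rintro ⟨g, hg, rfl⟩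
    exact mem_normalizer_stabilizer_iff.1 hg

theorem isClosed_orbit_centralizer (y : X) :
    IsClosed (orbit (Subgroup.centralizer (E : Set (X ≃ₜ X))) y) := by
  rw [orbit_centralizer_eq_image]
  exact ((isClosed_normalizer_stabilizer y).isCompact.image (orbitMap y).continuous).isClosed

theorem finite_orbitRel_quotient_centralizer (x : X)
    [Finite (E ⧸ Subgroup.normalizer (stabilizer E x : Set E))] :
    Finite (orbitRel.Quotient (Subgroup.centralizer (E : Set (X ≃ₜ X))) X) := by
  refine Finite.of_surjective (fun q : E ⧸ Subgroup.normalizer (stabilizer E x : Set E) =>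
    q.liftOn' (fun g => (⟦g • x⟧ : orbitRel.Quotient _ X)) fun g g' hgg' => ?_) ?_
  · have hn := mem_normalizer_stabilizer_iff.1 (QuotientGroup.leftRel_apply.1 hgg')
    refine Quotient.sound' (Setoid.symm' _ ⟨⟨_, equivariantHomeomorph_mem_centralizer hn.symm⟩, ?_⟩)
    simpa [mul_smul] using equivariantHomeomorph_smul hn.symm g
  · rintro ⟨y⟩
    obtain ⟨g, rfl⟩ := exists_smul_eq E x y
    exact ⟨g, rfl⟩

end EquivariantMaps

theorem aut_orbits_clopen_general {G X : Type*} [Group G] [MetricSpace X] [CompactSpace X]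
    (Φ : G →* (X ≃ₜ X))
    (hmin : ∀ y : X, Dense (Set.range fun g : G => Φ g y))
    (heq : ∀ ε > 0, ∃ δ > 0, ∀ (g : G) (y z : X), dist y z < δ → dist (Φ g y) (Φ g z) < ε)
    (E : Subgroup (X ≃ₜ X))
    (hE : (E : Set (X ≃ₜ X)) = closure (Set.range fun g : G => Φ g))
    (x : X)
    (hfi : (Subgroup.normalizer (MulAction.stabilizer ↥E x : Set ↥E)).FiniteIndex) :
    ∀ y : X, IsClopen (MulAction.orbit ↥(autGroup Φ) y) := by
  have hequi : Equicontinuous fun g => ⇑(Φ g) :=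
    (Metric.uniformEquicontinuous_iff.2 fun ε hε =>
      (heq ε hε).imp fun δ ⟨hδ, h⟩ => ⟨hδ, fun y z hyz g => h g y z hyz⟩).equicontinuous
  have hΦE (g : G) : Φ g ∈ E := by
    rw [← SetLike.mem_coe, hE]
    exact subset_closure ⟨g, rfl⟩
  have : CompactSpace E :=
    isCompact_iff_compactSpace.1 (hE ▸ isCompact_closure_range_of_equicontinuous_homeomorph Φ hequi)
  have : IsPretransitive E X := isPretransitive_of_dense_orbit (x := x) <|
    (hmin x).mono <| Set.range_subset_iff.2 fun g => ⟨⟨Φ g, hΦE g⟩, rfl⟩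
  have := finite_orbitRel_quotient_centralizer (E := E) x
  rw [autGroup_eq_centralizer_closure, ← hE]
  exact isClopen_orbit_of_finite isClosed_orbit_centralizer

/-- For an equicontinuous Cantor minimal system, if the normalizer
`N̂(Ḡ_x)` of the isotropy group has finite index in the Ellis group `Ḡ`, then every
orbit of `Aut(X,G,Φ)` on `X` is a clopen subset of `X`. -/
theorem aut_orbits_clopen {G X : Type*} [Group G] [MetricSpace X]
    [CompactSpace X] [TotallyDisconnectedSpace X] [PerfectSpace X] [Nonempty X]
    (Φ : G →* (X ≃ₜ X))
    (hmin : ∀ y : X, Dense (Set.range fun g : G => Φ g y))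
    (heq : ∀ ε > 0, ∃ δ > 0, ∀ (g : G) (y z : X), dist y z < δ → dist (Φ g y) (Φ g z) < ε)
    (E : Subgroup (X ≃ₜ X))
    (hE : (E : Set (X ≃ₜ X)) = closure (Set.range fun g : G => Φ g))
    (x : X)
    (hfi : (Subgroup.normalizer (MulAction.stabilizer ↥E x : Set ↥E)).FiniteIndex) :
    ∀ y : X, IsClopen (MulAction.orbit ↥(autGroup Φ) y) :=
  aut_orbits_clopen_general Φ hmin heq E hE x hfi

end CantorChains
end

section
/- Let {G_i}_{i≥0} be a group chain in a group G, let G_∞ be its inverse limit with basepoint x = (eG_i), and let Φ : G → Homeo(G_∞) be the induced action homomorphism. Let Ḡ be the closure of Φ(G) in Homeo(G_∞) in the uniform topology. Then there is an isomorphism of topological groups Θ̂ : Ḡ → C_∞ satisfying Θ̂(Φ(g)) = ι(g) = (g C_i) for all g ∈ G, and Θ̂ restricts to an isomorphism of topological groups from the isotropy subgroup Ḡ_x = {φ ∈ Ḡ : φ(x) = x} onto the discriminant group D_x. -/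
namespace CantorChains

variable {G : Type*} [Group G]

lemma continuous_invLim_smul (V : ℕ → Subgroup G) (g : G) :
    Continuous fun u : InvLim V => g • u := by
  apply Continuous.subtype_mk
  apply continuous_pi
  intro i
  exact (continuous_of_discreteTopology (α := G ⧸ V i)).comp
    ((continuous_apply i).comp continuous_subtype_val)

/-- The homeomorphism of the inverse limit given by the action of `g ∈ G`. -/
def actionHomeo (V : ℕ → Subgroup G) (g : G) : InvLim V ≃ₜ InvLim V where
  toEquiv := MulAction.toPerm g
  continuous_toFun := continuous_invLim_smul V g
  continuous_invFun := continuous_invLim_smul V g⁻¹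

/-- The monodromy homomorphism `Φ : G → Homeo(G_∞)` induced by a chain of subgroups. -/
def actionHom (V : ℕ → Subgroup G) : G →* (InvLim V ≃ₜ InvLim V) :=
  MonoidHom.mk' (fun g => actionHomeo V g) fun a b =>
    Homeomorph.ext fun u => mul_smul a b u

end CantorChains

namespace CantorChains

section Aux

variable {G : Type*} [Group G]

/-- The action of `G ⧸ H.normalCore` on `G ⧸ H` induced by left multiplication. -/
def smulQ {H : Subgroup G} (c : G ⧸ H.normalCore) (q : G ⧸ H) : G ⧸ H :=
  Quotient.liftOn' c (fun g => g • q) (fun g g' hgg' => by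
    rw [QuotientGroup.leftRel_apply] at hgg'
    induction q using Quotient.inductionOn' with
    | h a =>
      show QuotientGroup.mk (g * a) = QuotientGroup.mk (g' * a)
      apply Quotient.sound'
      rw [QuotientGroup.leftRel_apply]
      have h1 : a⁻¹ * (g⁻¹ * g') * a ∈ H.normalCore := by
        simpa using H.normalCore_normal.conj_mem _ hgg' a⁻¹
      have h2 : (g * a)⁻¹ * (g' * a) = a⁻¹ * (g⁻¹ * g') * a := by group
      rw [h2]
      exact H.normalCore_le h1)

@[simp] lemma smulQ_mk {H : Subgroup G} (g : G) (q : G ⧸ H) :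
    smulQ (QuotientGroup.mk g) q = g • q := rfl

lemma smulQ_mk_mk {H : Subgroup G} (g a : G) :
    smulQ (QuotientGroup.mk g) (QuotientGroup.mk a : G ⧸ H) = QuotientGroup.mk (g * a) := rfl

lemma smulQ_mul {H : Subgroup G} (c d : G ⧸ H.normalCore) (q : G ⧸ H) :
    smulQ (c * d) q = smulQ c (smulQ d q) := by
  induction c using Quotient.inductionOn' with
  | h g =>
    induction d using Quotient.inductionOn' with
    | h g' =>
      induction q using Quotient.inductionOn' with
      | h a =>
        show smulQ (QuotientGroup.mk (g * g')) (QuotientGroup.mk a) = _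
        rw [smulQ_mk_mk, smulQ_mk_mk, smulQ_mk_mk, mul_assoc]

lemma smulQ_one {H : Subgroup G} (q : G ⧸ H) : smulQ (1 : G ⧸ H.normalCore) q = q := by
  induction q using Quotient.inductionOn' with
  | h a =>
    show smulQ (QuotientGroup.mk 1) (QuotientGroup.mk a) = QuotientGroup.mk a
    rw [smulQ_mk_mk, one_mul]

lemma cosetMap_smulQ {H K : Subgroup G} (h : H ≤ K) (c : G ⧸ H.normalCore) (q : G ⧸ H) :
    cosetMap h (smulQ c q) =
      smulQ (cosetMap (Subgroup.normalCore_mono h) c) (cosetMap h q) := by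
  induction c using Quotient.inductionOn' with
  | h g =>
    induction q using Quotient.inductionOn' with
    | h a => rfl

variable (V : ℕ → Subgroup G)

/-- The action of the limit core on the inverse limit. -/
def coreAct (u : ↥(limitCore V)) (v : InvLim V) : InvLim V :=
  ⟨fun i => smulQ (u.1 i) (v.1 i), fun i j hij hle => by
    rw [cosetMap_smulQ hle, v.2 i j hij hle, u.2 i j hij (Subgroup.normalCore_mono hle)]⟩

lemma continuous_coreAct_uncurry :
    Continuous fun p : ↥(limitCore V) × InvLim V => coreAct V p.1 p.2 := by
  apply Continuous.subtype_mk
  apply continuous_pi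
  intro i
  have h1 : Continuous fun p : ↥(limitCore V) × InvLim V =>
      ((p.1 : ∀ j, G ⧸ (V j).normalCore) i, p.2.1 i) :=
    ((continuous_apply i).comp (continuous_subtype_val.comp continuous_fst)).prodMk
      ((continuous_apply i).comp (continuous_subtype_val.comp continuous_snd))
  exact (continuous_of_discreteTopology
    (f := fun cq : (G ⧸ (V i).normalCore) × (G ⧸ V i) => smulQ cq.1 cq.2)).comp h1

lemma coreAct_coreAct (u w : ↥(limitCore V)) (v : InvLim V) :
    coreAct V u (coreAct V w v) = coreAct V (u * w) v :=
  Subtype.ext (funext fun i => (smulQ_mul _ _ _).symm)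

lemma coreAct_one (v : InvLim V) : coreAct V 1 v = v :=
  Subtype.ext (funext fun i => smulQ_one _)

/-- The homeomorphism of the inverse limit induced by an element of the limit core. -/
def coreHomeo (u : ↥(limitCore V)) : InvLim V ≃ₜ InvLim V where
  toFun := coreAct V u
  invFun := coreAct V u⁻¹
  left_inv v := by rw [coreAct_coreAct, inv_mul_cancel, coreAct_one]
  right_inv v := by rw [coreAct_coreAct, mul_inv_cancel, coreAct_one]
  continuous_toFun := (continuous_coreAct_uncurry V).comp (Continuous.prodMk_right u)
  continuous_invFun := (continuous_coreAct_uncurry V).comp (Continuous.prodMk_right u⁻¹)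

/-- The homomorphism `Ψ : C_∞ → Homeo(G_∞)`. -/
def corePsi : ↥(limitCore V) →* (InvLim V ≃ₜ InvLim V) :=
  MonoidHom.mk' (fun u => coreHomeo V u) (fun a b =>
    Homeomorph.ext fun v => (coreAct_coreAct V a b v).symm)

lemma corePsi_apply (u : ↥(limitCore V)) (v : InvLim V) :
    corePsi V u v = coreAct V u v := rfl

lemma continuous_corePsi : Continuous (corePsi V) := by
  apply continuous_induced_rng.2
  exact ContinuousMap.continuous_of_continuous_uncurry _ (continuous_coreAct_uncurry V)

lemma corePsi_iota (g : G) : corePsi V (iotaC V g) = actionHom V g :=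
  Homeomorph.ext fun v => rfl

/-- The constant sequence in the inverse limit. -/
def constLim (c : G) : InvLim V := ⟨fun _ => QuotientGroup.mk c, fun _ _ _ _ => rfl⟩

lemma corePsi_injective : Function.Injective (corePsi V) := by
  intro a b hab
  apply Subtype.ext
  funext i
  obtain ⟨g, hg⟩ := QuotientGroup.mk_surjective (a.1 i)
  obtain ⟨h, hh⟩ := QuotientGroup.mk_surjective (b.1 i)
  rw [← hg, ← hh]
  apply Quotient.sound'
  rw [QuotientGroup.leftRel_apply]
  intro c
  have hc : smulQ (a.1 i) (QuotientGroup.mk c⁻¹ : G ⧸ V i) =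
      smulQ (b.1 i) (QuotientGroup.mk c⁻¹) :=
    congrArg (fun φ : InvLim V ≃ₜ InvLim V => (φ (constLim V c⁻¹)).1 i) hab
  rw [← hg, ← hh, smulQ_mk_mk, smulQ_mk_mk] at hc
  have := QuotientGroup.leftRel_apply.mp (Quotient.exact' hc)
  have he : (g * c⁻¹)⁻¹ * (h * c⁻¹) = c * (g⁻¹ * h) * c⁻¹ := by group
  rwa [he] at this

lemma coreAct_basepoint_iff (u : ↥(limitCore V)) :
    coreAct V u (basepoint V) = basepoint V ↔
      (u : ∀ i, G ⧸ (V i).normalCore) ∈ discriminant V := by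
  constructor
  · intro hfix
    refine ⟨u.2, fun i => ?_⟩
    obtain ⟨g, hg⟩ := QuotientGroup.mk_surjective (u.1 i)
    have hi : smulQ (u.1 i) (QuotientGroup.mk 1 : G ⧸ V i) = QuotientGroup.mk 1 :=
      congrArg (fun v : InvLim V => v.1 i) hfix
    rw [← hg, smulQ_mk_mk, mul_one] at hi
    have hmem := QuotientGroup.leftRel_apply.mp (Quotient.exact' hi)
    rw [mul_one] at hmem
    exact ⟨g, inv_mem_iff.mp hmem, hg⟩
  · intro hmem
    apply Subtype.ext
    funext i
    obtain ⟨g, hgV, hg⟩ := hmem.2 i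
    show smulQ (u.1 i) (QuotientGroup.mk 1 : G ⧸ V i) = QuotientGroup.mk 1
    rw [← hg, smulQ_mk_mk, mul_one]
    apply Quotient.sound'
    rw [QuotientGroup.leftRel_apply, mul_one]
    exact inv_mem hgV

lemma isClosed_compatSet (W : ℕ → Subgroup G) :
    IsClosed {u : ∀ i, G ⧸ W i | ∀ i j, i ≤ j → ∀ hle : W j ≤ W i, cosetMap hle (u j) = u i} := by
  have hset : {u : ∀ i, G ⧸ W i | ∀ i j, i ≤ j → ∀ hle : W j ≤ W i, cosetMap hle (u j) = u i}
      = ⋂ i, ⋂ j, ⋂ (_ : i ≤ j), ⋂ hle : W j ≤ W i, {u | cosetMap hle (u j) = u i} := by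
    ext u
    simp only [Set.mem_iInter, Set.mem_setOf_eq]
  rw [hset]
  exact isClosed_iInter fun i => isClosed_iInter fun j => isClosed_iInter fun _ =>
    isClosed_iInter fun hle => isClosed_eq
      ((continuous_of_discreteTopology
        (f := fun q : G ⧸ W j => cosetMap hle q)).comp (continuous_apply j))
      (continuous_apply i)

lemma dense_iota (hV : Antitone V) (u : ↥(limitCore V)) :
    u ∈ closure (Set.range (iotaC V)) := by
  choose g hg using fun n => QuotientGroup.mk_surjective (u.1 n)
  have htt : Filter.Tendsto (fun n => iotaC V (g n)) Filter.atTop (nhds u) := by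
    rw [tendsto_subtype_rng]
    rw [tendsto_pi_nhds]
    intro i
    apply tendsto_nhds_of_eventually_eq
    filter_upwards [Filter.eventually_ge_atTop i] with n hn
    have hle : (V n).normalCore ≤ (V i).normalCore :=
      Subgroup.normalCore_mono (hV hn)
    have := u.2 i n hn hle
    rw [← hg n, cosetMap_mk] at this
    exact this
  exact mem_closure_of_tendsto htt (Filter.Eventually.of_forall fun n => ⟨g n, rfl⟩)

end Aux

/-- For a group chain `{G_i}` with inverse limit `G_∞`, basepoint
`x = (eG_i)`, induced action `Φ : G → Homeo(G_∞)`, and Ellis group `Ḡ` the closure of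
`Φ(G)` (realized as a subgroup `E` of the homeomorphism group whose underlying set is
that closure), there is an isomorphism of topological groups `Θ̂ : Ḡ → C_∞` onto the
limit core with `Θ̂(Φ(g)) = ι(g)`, which identifies the isotropy group `Ḡ_x` with the
discriminant group `D_x`. -/
theorem ellis_group_iso_limitCore {G : Type*} [Group G] (Gc : GroupChain G)
    (E : Subgroup (InvLim Gc.sub ≃ₜ InvLim Gc.sub))
    (hE : (E : Set (InvLim Gc.sub ≃ₜ InvLim Gc.sub)) =
      closure (Set.range fun g : G => actionHom Gc.sub g)) :
    ∃ Θ : ↥E ≃* ↥(limitCore Gc.sub),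
      Continuous ⇑Θ ∧ Continuous ⇑Θ.symm ∧
      (∀ (g : G) (hg : actionHom Gc.sub g ∈ E), Θ ⟨actionHom Gc.sub g, hg⟩ = iotaC Gc.sub g) ∧
      (∀ e : ↥E, ((e : InvLim Gc.sub ≃ₜ InvLim Gc.sub) (basepoint Gc.sub) = basepoint Gc.sub ↔
        ((Θ e : ↥(limitCore Gc.sub)) : ∀ i, G ⧸ (Gc.sub i).normalCore) ∈
          discriminant Gc.sub)) := by
  classical
  haveI hfin : ∀ i, Finite (G ⧸ (Gc.sub i).normalCore) := fun i =>
    haveI := Gc.finiteIndex i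
    inferInstance
  haveI hfin2 : ∀ i, Finite (G ⧸ Gc.sub i) := fun i =>
    haveI := Gc.finiteIndex i
    inferInstance
  haveI hT2X : T2Space (InvLim Gc.sub) :=
    Topology.IsEmbedding.t2Space
      (f := fun u : InvLim Gc.sub => (u.1 : ∀ i, G ⧸ Gc.sub i)) ⟨⟨rfl⟩, Subtype.val_injective⟩
  haveI hcX : CompactSpace (InvLim Gc.sub) :=
    isCompact_iff_compactSpace.mp (isClosed_compatSet Gc.sub).isCompact
  haveI hcC : CompactSpace ↥(limitCore Gc.sub) :=
    isCompact_iff_compactSpace.mp (isClosed_compatSet fun i => (Gc.sub i).normalCore).isCompact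
  haveI hT2H : T2Space (InvLim Gc.sub ≃ₜ InvLim Gc.sub) :=
    Topology.IsEmbedding.t2Space
      (f := fun h : InvLim Gc.sub ≃ₜ InvLim Gc.sub => (h : C(InvLim Gc.sub, InvLim Gc.sub)))
      ⟨⟨rfl⟩, fun a b hab => Homeomorph.ext fun x => ContinuousMap.congr_fun hab x⟩
  have hΨcont : Continuous (corePsi Gc.sub) := continuous_corePsi Gc.sub
  have hrange_closed : IsClosed (Set.range (corePsi Gc.sub)) := (isCompact_range hΨcont).isClosed
  have hsub1 : (Set.range fun g : G => actionHom Gc.sub g) ⊆ Set.range (corePsi Gc.sub) := by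
    rintro _ ⟨g, rfl⟩
    exact ⟨iotaC Gc.sub g, corePsi_iota Gc.sub g⟩
  have hsub2 : Set.range (corePsi Gc.sub) ⊆ closure (Set.range fun g : G => actionHom Gc.sub g) := by
    rintro _ ⟨u, rfl⟩
    have hu : corePsi Gc.sub u ∈ corePsi Gc.sub '' closure (Set.range (iotaC Gc.sub)) :=
      ⟨u, dense_iota Gc.sub Gc.antitone u, rfl⟩
    have h1 := image_closure_subset_closure_image (s := Set.range (iotaC Gc.sub)) hΨcont hu
    refine closure_mono ?_ h1
    rintro _ ⟨_, ⟨g, rfl⟩, rfl⟩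
    exact ⟨g, (corePsi_iota Gc.sub g).symm⟩
  have hEeq : (E : Set (InvLim Gc.sub ≃ₜ InvLim Gc.sub)) = Set.range (corePsi Gc.sub) := by
    rw [hE]
    exact Set.Subset.antisymm (closure_minimal hsub1 hrange_closed) hsub2
  have hmem : ∀ u, corePsi Gc.sub u ∈ E := fun u => by
    rw [← SetLike.mem_coe, hEeq]
    exact ⟨u, rfl⟩
  let Ψ' : ↥(limitCore Gc.sub) →* ↥E := (corePsi Gc.sub).codRestrict E hmem
  have hbij : Function.Bijective Ψ' := by
    constructor
    · intro a b hab
      exact corePsi_injective Gc.sub (congrArg Subtype.val hab)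
    · rintro ⟨e, he⟩
      rw [← SetLike.mem_coe, hEeq] at he
      obtain ⟨u, hu⟩ := he
      exact ⟨u, Subtype.ext hu⟩
  let eqv : ↥(limitCore Gc.sub) ≃* ↥E := MulEquiv.ofBijective Ψ' hbij
  have heqvcont : Continuous ⇑eqv := hΨcont.subtype_mk hmem
  let homeo : ↥(limitCore Gc.sub) ≃ₜ ↥E :=
    Continuous.homeoOfEquivCompactToT2 (f := eqv.toEquiv) heqvcont
  refine ⟨eqv.symm, ?_, ?_, ?_, ?_⟩
  · exact homeo.symm.continuous
  · exact heqvcont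
  · intro g hg
    apply eqv.injective
    rw [MulEquiv.apply_symm_apply]
    exact Subtype.ext (corePsi_iota Gc.sub g).symm
  · intro e
    have he : (e : InvLim Gc.sub ≃ₜ InvLim Gc.sub) = corePsi Gc.sub (eqv.symm e) :=
      congrArg Subtype.val (eqv.apply_symm_apply e).symm
    rw [he]
    exact coreAct_basepoint_iff Gc.sub (eqv.symm e)

end CantorChains
end

section
/- Let {G_i}_{i≥0} be a group chain in a group G, with limit core C_∞, natural homomorphism ι : G → C_∞, and discriminant group D_x ⊆ C_∞. Then the rational core ⋂_{k ∈ G} ι(k) · D_x · ι(k)^{-1} is the trivial subgroup of C_∞. -/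
namespace CantorChains

section

variable {G : Type*} [Group G]

@[simp]
theorem iotaPi_apply (V : ℕ → Subgroup G) (g : G) (i : ℕ) :
    iotaPi V g i = (g : G ⧸ (V i).normalCore) :=
  rfl

theorem mem_of_mk_normalCore_eq {H : Subgroup G} {g a : G} (hg : g ∈ H)
    (h : (g : G ⧸ H.normalCore) = a) : a ∈ H := by
  simpa using H.mul_mem hg (H.normalCore_le (QuotientGroup.eq.mp h))

theorem exists_mem_mk_eq_of_mem_map_conj {V : ℕ → Subgroup G} {k : G}
    {u : ∀ i, G ⧸ (V i).normalCore}
    (hu : u ∈ (discriminant V).map (MulAut.conj (iotaPi V k)).toMonoidHom) (i : ℕ) :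
    ∃ g ∈ V i, (g : G ⧸ (V i).normalCore) = (k⁻¹ : G) * u i * (k : G) := by
  obtain ⟨d, hd, rfl⟩ := Subgroup.mem_map.mp hu
  obtain ⟨g, hg, hgd⟩ := hd.2 i
  refine ⟨g, hg, ?_⟩
  simp [hgd, mul_assoc]

theorem iInf_map_conj_discriminant_eq_bot (V : ℕ → Subgroup G) :
    (⨅ k : G, (discriminant V).map (MulAut.conj (iotaPi V k)).toMonoidHom) = ⊥ := by
  refine (Subgroup.eq_bot_iff_forall _).mpr fun u hu => funext fun i => ?_
  obtain ⟨a, ha⟩ := QuotientGroup.mk_surjective (u i)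
  rw [Pi.one_apply, ← ha, QuotientGroup.eq_one_iff]
  intro k
  obtain ⟨g, hg, hga⟩ :=
    exists_mem_mk_eq_of_mem_map_conj (Subgroup.mem_iInf.mp hu k⁻¹) i
  rw [← ha, inv_inv] at hga
  exact mem_of_mk_normalCore_eq hg hga

end

/-- For a group chain, the "rational core"
`⋂_{k ∈ G} ι(k) · D_x · ι(k)⁻¹` of the discriminant group is trivial. -/
theorem rational_core_trivial {G : Type*} [Group G] (Gc : GroupChain G) :
    (⨅ k : G, (discriminant Gc.sub).map (MulAut.conj (iotaPi Gc.sub k)).toMonoidHom) = ⊥ :=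
  iInf_map_conj_discriminant_eq_bot Gc.sub

end CantorChains
end

section
/- Let {G_i}_{i≥0} be a group chain in a group G, with limit core C_∞ and discriminant group D_x ⊆ C_∞. Then the maximal normal subgroup of C_∞ contained in D_x is trivial; that is, ⋂_{c ∈ C_∞} c · D_x · c^{-1} is the trivial subgroup, and every subgroup of D_x which is normal in C_∞ is trivial. -/
namespace CantorChains

/-- The maximal normal subgroup of `C_∞` contained in the
discriminant group `D_x` is trivial: the intersection `⋂_{c ∈ C_∞} c·D_x·c⁻¹` is the
trivial subgroup, and every subgroup of `D_x` which is normal in `C_∞` is trivial. -/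
theorem maximal_normal_subgroup_of_discriminant_trivial {G : Type*} [Group G]
    (Gc : GroupChain G) :
    (⨅ c : ↥(limitCore Gc.sub),
        ((discriminant Gc.sub).subgroupOf (limitCore Gc.sub)).map
          (MulAut.conj c).toMonoidHom) = ⊥ ∧
    (∀ S : Subgroup ↥(limitCore Gc.sub),
        S ≤ (discriminant Gc.sub).subgroupOf (limitCore Gc.sub) → S.Normal → S = ⊥) := by
  have key : ∀ u : ∀ i, G ⧸ (Gc.sub i).normalCore,
      (∀ g : G, iotaPi Gc.sub g * u * (iotaPi Gc.sub g)⁻¹ ∈ discriminant Gc.sub) → u = 1 := by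
    intro u hu
    funext i
    obtain ⟨x, hx⟩ := QuotientGroup.mk_surjective (u i)
    have hxcore : x ∈ (Gc.sub i).normalCore := by
      intro g
      obtain ⟨k, hk, hkeq⟩ := (hu g).2 i
      have : (QuotientGroup.mk k : G ⧸ (Gc.sub i).normalCore)
          = QuotientGroup.mk (g * x * g⁻¹) := by
        rw [hkeq]
        simp only [Pi.mul_apply, Pi.inv_apply, ← hx]
        rfl
      have hmem : k⁻¹ * (g * x * g⁻¹) ∈ (Gc.sub i).normalCore :=
        (QuotientGroup.eq).mp this
      have : g * x * g⁻¹ = k * (k⁻¹ * (g * x * g⁻¹)) := by group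
      rw [this]
      exact mul_mem hk ((Gc.sub i).normalCore_le hmem)
    show u i = 1
    rw [← hx, QuotientGroup.eq_one_iff]
    exact hxcore
  constructor
  · rw [eq_bot_iff]
    intro u hu
    rw [Subgroup.mem_iInf] at hu
    rw [Subgroup.mem_bot]
    have hu1 : (u : ∀ i, G ⧸ (Gc.sub i).normalCore) = 1 := by
      apply key
      intro g
      obtain ⟨d, hd, hdeq⟩ := hu (iotaC Gc.sub g)⁻¹
      have : d = iotaC Gc.sub g * u * (iotaC Gc.sub g)⁻¹ := by
        have : (MulAut.conj (iotaC Gc.sub g)⁻¹) d = u := hdeq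
        simp only [MulAut.conj_apply] at this
        rw [← this]; group
      have hd2 := Subgroup.mem_subgroupOf.mp hd
      rw [this] at hd2
      exact hd2
    exact Subtype.ext hu1
  · intro S hS hN
    rw [eq_bot_iff]
    intro s hs
    rw [Subgroup.mem_bot]
    apply Subtype.ext
    apply key
    intro g
    have := hS (hN.conj_mem s hs (iotaC Gc.sub g))
    rw [Subgroup.mem_subgroupOf] at this
    exact this

end CantorChains
end
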